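/- arXiv:2504.03592 — 7 statements merged into one kernel-verified Lean document; each statement's English description precedes it below -/
import Mathlib

section
/- Let X ⊆ ℝ^m and Y ⊆ ℝ^n be nonempty, compact, convex sets, and let f : ℝ^m × ℝ^n → ℝ be continuous such that for every y ∈ Y the map x ↦ f(x,y) is convex on X, and for every x ∈ X the map y ↦ f(x,y) is concave on Y. Then the minimax equality holds: min_{x∈X} max_{y∈Y} f(x,y) = max_{y∈Y} min_{x∈X} f(x,y), where all the indicated minima and maxima are attained. -/
/-!
The inequality `max_y min_x f ≤ min_x max_y f` is trivial; for the converse it suffices to show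
that if every `x ∈ X` has some `y ∈ Y` with `c < f x y`, then a single `y ∈ Y` does this for all
`x ∈ X` at once (Komiya's proof of Sion's theorem). By compactness of `X` finitely many `y`
suffice, and by induction on their number, replacing `X` by the convex compact sublevel set
`{x ∈ X | f x y ≤ c}` of one of them, everything reduces to two points `y₁, y₂`. For two points,
if no `y` on the segment `[y₁, y₂]` works, each sublevel set `{x ∈ X | f x y ≤ c}` with `y` on
the segment is a nonempty convex set lying in the union of the disjoint closed sets
`{f · y₁ ≤ c}` and `{f · y₂ ≤ c}` (by quasiconcavity in `y`), hence in exactly one of them; this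
splits the segment into two disjoint nonempty closed pieces, contradicting its connectedness.
-/

open Set Function Convex

theorem QuasiconcaveOn.min_le_of_mem_segment {𝕜 E β : Type*} [Semiring 𝕜] [PartialOrder 𝕜]
    [AddCommMonoid E] [SMul 𝕜 E] [LinearOrder β] {s : Set E} {f : E → β} {x y z : E}
    (hf : QuasiconcaveOn 𝕜 s f) (hx : x ∈ s) (hy : y ∈ s) (hz : z ∈ [x -[𝕜] y]) :
    min (f x) (f y) ≤ f z := by
  obtain ⟨a, b, ha, hb, hab, rfl⟩ := hz
  exact (quasiconcaveOn_iff_min_le.mp hf).2 hx hy ha hb hab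

theorem IsCompact.isClosed_setOf_exists_le {α β : Type*} [TopologicalSpace α]
    [TopologicalSpace β] {A : Set α} (hA : IsCompact A) {g : α → β → ℝ} (hg : Continuous ↿g)
    (c : ℝ) : IsClosed {b | ∃ a ∈ A, g a b ≤ c} := by
  have : CompactSpace A := isCompact_iff_compactSpace.mp hA
  have hclosed : IsClosed {p : A × β | g p.1 p.2 ≤ c} :=
    isClosed_le (hg.comp (continuous_subtype_val.prodMap continuous_id)) continuous_const
  convert isClosedMap_snd_of_compactSpace _ hclosed using 1
  ext b
  simp

theorem IsCompact.exists_isLeast_image {α β : Type*} [TopologicalSpace α] [TopologicalSpace β]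
    [LinearOrder β] [ClosedIicTopology β] {K : Set α} {φ : α → β} (hK : IsCompact K)
    (hne : K.Nonempty) (hφ : ContinuousOn φ K) : ∃ x ∈ K, IsLeast (φ '' K) (φ x) := by
  obtain ⟨_, hleast⟩ := (hK.image_of_continuousOn hφ).exists_isLeast (hne.image φ)
  obtain ⟨x, hx, rfl⟩ := hleast.1
  exact ⟨x, hx, hleast⟩

theorem IsCompact.exists_isGreatest_image {α β : Type*} [TopologicalSpace α]
    [TopologicalSpace β] [LinearOrder β] [ClosedIciTopology β] {K : Set α} {φ : α → β}
    (hK : IsCompact K) (hne : K.Nonempty) (hφ : ContinuousOn φ K) :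
    ∃ x ∈ K, IsGreatest (φ '' K) (φ x) := by
  obtain ⟨_, hgreatest⟩ := (hK.image_of_continuousOn hφ).exists_isGreatest (hne.image φ)
  obtain ⟨x, hx, rfl⟩ := hgreatest.1
  exact ⟨x, hx, hgreatest⟩

section Sion

variable {E F : Type*} [AddCommGroup E] [Module ℝ E] [TopologicalSpace E]
  [IsTopologicalAddGroup E] [ContinuousSMul ℝ E] [AddCommGroup F] [Module ℝ F]
  [TopologicalSpace F] {K : Set E} {Y : Set F} {f : E → F → ℝ} {c : ℝ}

theorem sep_le_subset_or_subset_of_mem_segment (hf : Continuous ↿f)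
    (hfx : ∀ y ∈ Y, QuasiconvexOn ℝ K fun x => f x y) (hfy : ∀ x ∈ K, QuasiconcaveOn ℝ Y (f x))
    {y₁ y₂ y : F} (hy₁ : y₁ ∈ Y) (hy₂ : y₂ ∈ Y) (hyY : y ∈ Y) (hy : y ∈ [y₁ -[ℝ] y₂])
    (h : ∀ x ∈ K, c < f x y₁ ∨ c < f x y₂) :
    {x ∈ K | f x y ≤ c} ⊆ {x | f x y₁ ≤ c} ∨ {x ∈ K | f x y ≤ c} ⊆ {x | f x y₂ ≤ c} := by
  refine isPreconnected_iff_subset_of_disjoint_closed.mp (hfx y hyY c).isPreconnected _ _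
    (isClosed_le (hf.comp (.prodMk_left y₁)) continuous_const)
    (isClosed_le (hf.comp (.prodMk_left y₂)) continuous_const) ?_ ?_
  · rintro x ⟨hxK, hxy⟩
    exact min_le_iff.mp (((hfy x hxK).min_le_of_mem_segment hy₁ hy₂ hy).trans hxy)
  · refine eq_empty_of_forall_notMem fun x ⟨⟨hxK, _⟩, hx₁, hx₂⟩ => ?_
    exact (h x hxK).elim (not_lt.mpr hx₁) (not_lt.mpr hx₂)

variable [IsTopologicalAddGroup F] [ContinuousSMul ℝ F]

theorem exists_forall_lt_of_forall_lt_or_lt (hK : IsCompact K) (hY : Convex ℝ Y)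
    (hf : Continuous ↿f) (hfx : ∀ y ∈ Y, QuasiconvexOn ℝ K fun x => f x y)
    (hfy : ∀ x ∈ K, QuasiconcaveOn ℝ Y (f x)) {y₁ y₂ : F} (hy₁ : y₁ ∈ Y) (hy₂ : y₂ ∈ Y)
    (h : ∀ x ∈ K, c < f x y₁ ∨ c < f x y₂) : ∃ y ∈ Y, ∀ x ∈ K, c < f x y := by
  by_contra! hcon
  have hsegY := hY.segment_subset hy₁ hy₂
  have hsplit y (hy : y ∈ [y₁ -[ℝ] y₂]) :=
    sep_le_subset_or_subset_of_mem_segment hf hfx hfy hy₁ hy₂ (hsegY hy) hy h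
  have hK₁ : IsCompact {x ∈ K | f x y₁ ≤ c} :=
    hK.inter_right (isClosed_le (hf.comp (.prodMk_left y₁)) continuous_const)
  have hK₂ : IsCompact {x ∈ K | f x y₂ ≤ c} :=
    hK.inter_right (isClosed_le (hf.comp (.prodMk_left y₂)) continuous_const)
  set T₁ := {y | ∃ x ∈ {x ∈ K | f x y₁ ≤ c}, f x y ≤ c}
  set T₂ := {y | ∃ x ∈ {x ∈ K | f x y₂ ≤ c}, f x y ≤ c}
  have hcover : [y₁ -[ℝ] y₂] ⊆ T₁ ∪ T₂ := by
    intro y hy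
    obtain ⟨x, hxK, hxy⟩ := hcon y (hsegY hy)
    exact (hsplit y hy).imp (fun hU => ⟨x, ⟨hxK, hU ⟨hxK, hxy⟩⟩, hxy⟩)
      fun hV => ⟨x, ⟨hxK, hV ⟨hxK, hxy⟩⟩, hxy⟩
  have hT₁ : ([y₁ -[ℝ] y₂] ∩ T₁).Nonempty := by
    obtain ⟨x, hxK, hxy⟩ := hcon y₁ hy₁
    exact ⟨y₁, left_mem_segment ℝ y₁ y₂, x, ⟨hxK, hxy⟩, hxy⟩
  have hT₂ : ([y₁ -[ℝ] y₂] ∩ T₂).Nonempty := by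
    obtain ⟨x, hxK, hxy⟩ := hcon y₂ hy₂
    exact ⟨y₂, right_mem_segment ℝ y₁ y₂, x, ⟨hxK, hxy⟩, hxy⟩
  obtain ⟨y, hy, ⟨x₁, ⟨hx₁K, hx₁⟩, hx₁y⟩, ⟨x₂, ⟨hx₂K, hx₂⟩, hx₂y⟩⟩ :=
    isPreconnected_closed_iff.mp (convex_segment y₁ y₂).isPreconnected T₁ T₂
      (hK₁.isClosed_setOf_exists_le hf c) (hK₂.isClosed_setOf_exists_le hf c) hcover hT₁ hT₂
  rcases hsplit y hy with hU | hV
  · exact (h x₂ hx₂K).elim (not_lt.mpr (hU ⟨hx₂K, hx₂y⟩)) (not_lt.mpr hx₂)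
  · exact (h x₁ hx₁K).elim (not_lt.mpr hx₁) (not_lt.mpr (hV ⟨hx₁K, hx₁y⟩))

theorem exists_forall_lt_of_forall_exists_lt_of_finite (hK : IsCompact K) (hY : Convex ℝ Y)
    (hYne : Y.Nonempty) (hf : Continuous ↿f) (hfx : ∀ y ∈ Y, QuasiconvexOn ℝ K fun x => f x y)
    (hfy : ∀ x ∈ K, QuasiconcaveOn ℝ Y (f x)) {s : Set F} (hs : s.Finite) (hsY : s ⊆ Y)
    (h : ∀ x ∈ K, ∃ y ∈ s, c < f x y) : ∃ y ∈ Y, ∀ x ∈ K, c < f x y := by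
  induction s, hs using Set.Finite.induction_on generalizing K with
  | empty =>
    obtain ⟨y, hy⟩ := hYne
    exact ⟨y, hy, fun x hx => by simpa using h x hx⟩
  | @insert a s _ _ ih =>
    have ha : a ∈ Y := hsY (mem_insert a s)
    set K' := {x ∈ K | f x a ≤ c}
    have hK' : IsCompact K' :=
      hK.inter_right (isClosed_le (hf.comp (.prodMk_left a)) continuous_const)
    have hK'cv : Convex ℝ K' := hfx a ha c
    have hK's : ∀ x ∈ K', ∃ y ∈ s, c < f x y := by
      rintro x ⟨hxK, hxa⟩
      obtain ⟨y, rfl | hys, hxy⟩ := h x hxK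
      exacts [absurd hxa (not_le.mpr hxy), ⟨y, hys, hxy⟩]
    obtain ⟨y', hy', hK'y'⟩ := ih hK'
      (fun y hy => hK'cv.quasiconvexOn_restrict (hfx y hy) (sep_subset K _))
      (fun x hx => hfy x hx.1) ((subset_insert a s).trans hsY) hK's
    refine exists_forall_lt_of_forall_lt_or_lt hK hY hf hfx hfy ha hy' fun x hxK => ?_
    exact (lt_or_ge c (f x a)).imp id fun hxa => hK'y' x ⟨hxK, hxa⟩

theorem exists_forall_lt_of_forall_exists_lt (hK : IsCompact K) (hY : Convex ℝ Y)
    (hYne : Y.Nonempty) (hf : Continuous ↿f) (hfx : ∀ y ∈ Y, QuasiconvexOn ℝ K fun x => f x y)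
    (hfy : ∀ x ∈ K, QuasiconcaveOn ℝ Y (f x)) (h : ∀ x ∈ K, ∃ y ∈ Y, c < f x y) :
    ∃ y ∈ Y, ∀ x ∈ K, c < f x y := by
  obtain ⟨s, hsY, hs, hcover⟩ := hK.elim_finite_subcover_image (c := fun y => {x | c < f x y})
    (fun y _ => isOpen_lt continuous_const (hf.comp (.prodMk_left y)))
    fun x hx => by simpa using h x hx
  exact exists_forall_lt_of_forall_exists_lt_of_finite hK hY hYne hf hfx hfy hs hsY
    fun x hx => by simpa using hcover hx

end Sion

theorem minimax_convex_concave_general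
    {m n : ℕ}
    (X : Set (EuclideanSpace ℝ (Fin m))) (Y : Set (EuclideanSpace ℝ (Fin n)))
    (hXne : X.Nonempty) (hXcp : IsCompact X)
    (hYne : Y.Nonempty) (hYcp : IsCompact Y) (hYcv : Convex ℝ Y)
    (f : EuclideanSpace ℝ (Fin m) → EuclideanSpace ℝ (Fin n) → ℝ)
    (hf : Continuous fun p : EuclideanSpace ℝ (Fin m) × EuclideanSpace ℝ (Fin n) => f p.1 p.2)
    (hfx : ∀ y ∈ Y, ConvexOn ℝ X fun x => f x y)
    (hfy : ∀ x ∈ X, ConcaveOn ℝ Y fun y => f x y) :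
    (∀ x ∈ X, ∃ y₀ ∈ Y, IsGreatest ((f x) '' Y) (f x y₀)) ∧
    (∀ y ∈ Y, ∃ x₀ ∈ X, IsLeast ((fun x => f x y) '' X) (f x₀ y)) ∧
    (∃ x₀ ∈ X, IsLeast ((fun x => sSup ((f x) '' Y)) '' X) (sSup ((f x₀) '' Y))) ∧
    (∃ y₀ ∈ Y, IsGreatest ((fun y => sInf ((fun x => f x y) '' X)) '' Y)
      (sInf ((fun x => f x y₀) '' X))) ∧
    sInf ((fun x => sSup ((f x) '' Y)) '' X)
      = sSup ((fun y => sInf ((fun x => f x y) '' X)) '' Y) := by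
  have hf_right : ∀ x, Continuous (f x) := fun x => hf.comp (.prodMk_right x)
  have hf_left : ∀ y, Continuous fun x => f x y := fun y => hf.comp (.prodMk_left y)
  have hmax : Continuous fun x => sSup (f x '' Y) := hYcp.continuous_sSup hf
  have hmin : Continuous fun y => sInf ((fun x => f x y) '' X) :=
    hXcp.continuous_sInf (f := fun y x => f x y) (hf.comp continuous_swap)
  obtain ⟨x₀, hx₀, hx₀min⟩ := hXcp.exists_isLeast_image hXne hmax.continuousOn
  obtain ⟨y₀, hy₀, hy₀max⟩ := hYcp.exists_isGreatest_image hYne hmin.continuousOn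
  refine ⟨fun x _ => hYcp.exists_isGreatest_image hYne (hf_right x).continuousOn,
    fun y _ => hXcp.exists_isLeast_image hXne (hf_left y).continuousOn,
    ⟨x₀, hx₀, hx₀min⟩, ⟨y₀, hy₀, hy₀max⟩, ?_⟩
  rw [hx₀min.csInf_eq, hy₀max.csSup_eq]
  refine le_antisymm (forall_lt_imp_le_iff_le_of_dense.mp fun c hc => ?_) ?_
  · obtain ⟨y, hy, hcy⟩ := exists_forall_lt_of_forall_exists_lt hXcp hYcv hYne hf
      (fun y hy => (hfx y hy).quasiconvexOn) (fun x hx => (hfy x hx).quasiconcaveOn)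
      fun x hx => by
        obtain ⟨_, ⟨y, hy, rfl⟩, hcy⟩ :=
          exists_lt_of_lt_csSup (hYne.image _) (hc.trans_le (hx₀min.2 (mem_image_of_mem _ hx)))
        exact ⟨y, hy, hcy⟩
    calc c ≤ sInf ((fun x => f x y) '' X) :=
          le_csInf (hXne.image _) (forall_mem_image.mpr fun x hx => (hcy x hx).le)
      _ ≤ _ := hy₀max.2 (mem_image_of_mem _ hy)
  · calc sInf ((fun x => f x y₀) '' X) ≤ f x₀ y₀ :=
          csInf_le (hXcp.bddBelow_image (hf_left y₀).continuousOn) (mem_image_of_mem _ hx₀)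
      _ ≤ sSup (f x₀ '' Y) :=
          le_csSup (hYcp.bddAbove_image (hf_right x₀).continuousOn) (mem_image_of_mem _ hy₀)

/-- Generalized von Neumann minimax theorem: for nonempty compact convex sets
`X ⊆ ℝ^m`, `Y ⊆ ℝ^n` and a continuous convex–concave function `f`, the minimax
equality holds and all indicated minima and maxima are attained. -/
theorem minimax_convex_concave
    {m n : ℕ}
    (X : Set (EuclideanSpace ℝ (Fin m))) (Y : Set (EuclideanSpace ℝ (Fin n)))
    (hXne : X.Nonempty) (hXcp : IsCompact X) (hXcv : Convex ℝ X)
    (hYne : Y.Nonempty) (hYcp : IsCompact Y) (hYcv : Convex ℝ Y)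
    (f : EuclideanSpace ℝ (Fin m) → EuclideanSpace ℝ (Fin n) → ℝ)
    (hf : Continuous fun p : EuclideanSpace ℝ (Fin m) × EuclideanSpace ℝ (Fin n) => f p.1 p.2)
    (hfx : ∀ y ∈ Y, ConvexOn ℝ X fun x => f x y)
    (hfy : ∀ x ∈ X, ConcaveOn ℝ Y fun y => f x y) :
    (∀ x ∈ X, ∃ y₀ ∈ Y, IsGreatest ((f x) '' Y) (f x y₀)) ∧
    (∀ y ∈ Y, ∃ x₀ ∈ X, IsLeast ((fun x => f x y) '' X) (f x₀ y)) ∧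
    (∃ x₀ ∈ X, IsLeast ((fun x => sSup ((f x) '' Y)) '' X) (sSup ((f x₀) '' Y))) ∧
    (∃ y₀ ∈ Y, IsGreatest ((fun y => sInf ((fun x => f x y) '' X)) '' Y)
      (sInf ((fun x => f x y₀) '' X))) ∧
    sInf ((fun x => sSup ((f x) '' Y)) '' X)
      = sSup ((fun y => sInf ((fun x => f x y) '' X)) '' Y) :=
  minimax_convex_concave_general X Y hXne hXcp hYne hYcp hYcv f hf hfx hfy
end

section
/- Let X ⊆ ℝ^m and Y ⊆ ℝ^n be nonempty, compact, convex sets, and let f : ℝ^m × ℝ^n → ℝ be continuous, convex in its first argument on X for each fixed y ∈ Y and concave in its second argument on Y for each fixed x ∈ X. Let T ≥ 1 and let x^1,…,x^T ∈ X and y^1,…,y^T ∈ Y be arbitrary sequences. Define the averages x̄ := (1/T)∑_{t=1}^T x^t and ȳ := (1/T)∑_{t=1}^T y^t, and the regrets r₁(T) := ∑_{t=1}^T f(x^t,y^t) − min_{x∈X} ∑_{t=1}^T f(x,y^t) and r₂(T) := max_{y∈Y} ∑_{t=1}^T f(x^t,y) − ∑_{t=1}^T f(x^t,y^t). Then the duality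 gap satisfies 0 ≤ max_{y∈Y} f(x̄,y) − min_{x∈X} f(x,ȳ) ≤ (r₁(T)+r₂(T))/T. -/
/-!
Averaging is a convex combination, so by Jensen's inequality
`f(x̄, y) ≤ (1/T) ∑ₜ f(xᵗ, y)` for every `y ∈ Y` and `f(x, ȳ) ≥ (1/T) ∑ₜ f(x, yᵗ)` for every `x ∈ X`.
Taking the maximum over `y` and the minimum over `x` bounds the gap by
`(1/T) (max_y ∑ₜ f(xᵗ, y) - min_x ∑ₜ f(x, yᵗ)) = (r₁ + r₂) / T`, the realised payoff
`∑ₜ f(xᵗ, yᵗ)` cancelling. The gap is nonnegative because both optima are compared with `f(x̄, ȳ)`.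
-/

open Finset Set

section Average

variable {ι E : Type*} [Fintype ι] [Nonempty ι] [AddCommGroup E] [Module ℝ E]
  {s : Set E} {x : ι → E}

lemma sum_inv_card_eq_one : ∑ _i : ι, (Fintype.card ι : ℝ)⁻¹ = 1 := by
  simp [Finset.card_univ]

lemma Convex.inv_card_smul_sum_mem (hs : Convex ℝ s) (hx : ∀ i, x i ∈ s) :
    (Fintype.card ι : ℝ)⁻¹ • ∑ i, x i ∈ s := by
  rw [Finset.smul_sum]
  exact hs.sum_mem (fun _ _ => by positivity) sum_inv_card_eq_one fun i _ => hx i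

lemma ConvexOn.map_inv_card_smul_sum_le {g : E → ℝ} (hg : ConvexOn ℝ s g) (hx : ∀ i, x i ∈ s) :
    g ((Fintype.card ι : ℝ)⁻¹ • ∑ i, x i) ≤ (Fintype.card ι : ℝ)⁻¹ * ∑ i, g (x i) := by
  rw [Finset.smul_sum, Finset.mul_sum]
  exact hg.map_sum_le (fun _ _ => by positivity) sum_inv_card_eq_one fun i _ => hx i

lemma ConcaveOn.inv_card_mul_sum_le_map {g : E → ℝ} (hg : ConcaveOn ℝ s g)
    (hx : ∀ i, x i ∈ s) :
    (Fintype.card ι : ℝ)⁻¹ * ∑ i, g (x i) ≤ g ((Fintype.card ι : ℝ)⁻¹ • ∑ i, x i) := by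
  rw [Finset.smul_sum, Finset.mul_sum]
  exact hg.le_map_sum (fun _ _ => by positivity) sum_inv_card_eq_one fun i _ => hx i

end Average

section ImageBounds

variable {α : Type*} {s : Set α} {g h : α → ℝ} {c : ℝ}

lemma csSup_image_le_mul_csSup_image (hc : 0 ≤ c) (hs : s.Nonempty) (hh : BddAbove (h '' s))
    (hgh : ∀ a ∈ s, g a ≤ c * h a) : sSup (g '' s) ≤ c * sSup (h '' s) :=
  csSup_le (hs.image g) <| forall_mem_image.2 fun a ha =>
    (hgh a ha).trans <| mul_le_mul_of_nonneg_left (le_csSup hh (mem_image_of_mem h ha)) hc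

lemma mul_csInf_image_le_csInf_image (hc : 0 ≤ c) (hs : s.Nonempty) (hh : BddBelow (h '' s))
    (hgh : ∀ a ∈ s, c * h a ≤ g a) : c * sInf (h '' s) ≤ sInf (g '' s) :=
  le_csInf (hs.image g) <| forall_mem_image.2 fun a ha =>
    (mul_le_mul_of_nonneg_left (csInf_le hh (mem_image_of_mem h ha)) hc).trans (hgh a ha)

end ImageBounds

theorem duality_gap_le_avg_sum_regrets_general
    {m n : ℕ}
    (X : Set (EuclideanSpace ℝ (Fin m))) (Y : Set (EuclideanSpace ℝ (Fin n)))
    (hXcp : IsCompact X) (hXcv : Convex ℝ X)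
    (hYcp : IsCompact Y) (hYcv : Convex ℝ Y)
    (f : EuclideanSpace ℝ (Fin m) → EuclideanSpace ℝ (Fin n) → ℝ)
    (hf : Continuous fun p : EuclideanSpace ℝ (Fin m) × EuclideanSpace ℝ (Fin n) => f p.1 p.2)
    (hfx : ∀ y ∈ Y, ConvexOn ℝ X fun x => f x y)
    (hfy : ∀ x ∈ X, ConcaveOn ℝ Y fun y => f x y)
    (T : ℕ) (hT : 1 ≤ T)
    (x : Fin T → EuclideanSpace ℝ (Fin m)) (y : Fin T → EuclideanSpace ℝ (Fin n))
    (hx : ∀ t, x t ∈ X) (hy : ∀ t, y t ∈ Y)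
    (xbar : EuclideanSpace ℝ (Fin m)) (hxbar : xbar = (T : ℝ)⁻¹ • ∑ t, x t)
    (ybar : EuclideanSpace ℝ (Fin n)) (hybar : ybar = (T : ℝ)⁻¹ • ∑ t, y t)
    (r₁ r₂ : ℝ)
    (hr₁ : r₁ = ∑ t, f (x t) (y t) - sInf ((fun x' => ∑ t, f x' (y t)) '' X))
    (hr₂ : r₂ = sSup ((fun y' => ∑ t, f (x t) y') '' Y) - ∑ t, f (x t) (y t)) :
    0 ≤ sSup ((f xbar) '' Y) - sInf ((fun x' => f x' ybar) '' X) ∧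
    sSup ((f xbar) '' Y) - sInf ((fun x' => f x' ybar) '' X) ≤ (r₁ + r₂) / T := by
  have : Nonempty (Fin T) := Fin.pos_iff_nonempty.1 hT
  have hTinv : (0 : ℝ) ≤ (T : ℝ)⁻¹ := by positivity
  have hxbarX : xbar ∈ X := by
    simpa only [Fintype.card_fin, ← hxbar] using hXcv.inv_card_smul_sum_mem hx
  have hybarY : ybar ∈ Y := by
    simpa only [Fintype.card_fin, ← hybar] using hYcv.inv_card_smul_sum_mem hy
  have hf_left (x' : EuclideanSpace ℝ (Fin m)) : Continuous (f x') := hf.uncurry_left x'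
  have hf_right (y' : EuclideanSpace ℝ (Fin n)) : Continuous (f · y') := hf.uncurry_right y'
  have hmax_le : sSup ((f xbar) '' Y) ≤
      (T : ℝ)⁻¹ * sSup ((fun y' => ∑ t, f (x t) y') '' Y) :=
    csSup_image_le_mul_csSup_image hTinv ⟨ybar, hybarY⟩
      (hYcp.bddAbove_image (continuous_finsetSum _ fun t _ => hf_left (x t)).continuousOn)
      fun y' hy' => by
        simpa only [Fintype.card_fin, ← hxbar] using (hfx y' hy').map_inv_card_smul_sum_le hx
  have hle_min : (T : ℝ)⁻¹ * sInf ((fun x' => ∑ t, f x' (y t)) '' X) ≤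
      sInf ((fun x' => f x' ybar) '' X) :=
    mul_csInf_image_le_csInf_image hTinv ⟨xbar, hxbarX⟩
      (hXcp.bddBelow_image (continuous_finsetSum _ fun t _ => hf_right (y t)).continuousOn)
      fun x' hx' => by
        simpa only [Fintype.card_fin, ← hybar] using (hfy x' hx').inv_card_mul_sum_le_map hy
  have hval_le_max : f xbar ybar ≤ sSup ((f xbar) '' Y) :=
    le_csSup (hYcp.bddAbove_image (hf_left xbar).continuousOn) (mem_image_of_mem _ hybarY)
  have hmin_le_val : sInf ((fun x' => f x' ybar) '' X) ≤ f xbar ybar :=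
    csInf_le (hXcp.bddBelow_image (hf_right ybar).continuousOn) (mem_image_of_mem _ hxbarX)
  refine ⟨by linarith, ?_⟩
  rw [hr₁, hr₂, div_eq_inv_mul]
  linarith

/-- The duality gap of the average iterates is bounded by the time-averaged sum
of the two players' regrets. -/
theorem duality_gap_le_avg_sum_regrets
    {m n : ℕ}
    (X : Set (EuclideanSpace ℝ (Fin m))) (Y : Set (EuclideanSpace ℝ (Fin n)))
    (hXne : X.Nonempty) (hXcp : IsCompact X) (hXcv : Convex ℝ X)
    (hYne : Y.Nonempty) (hYcp : IsCompact Y) (hYcv : Convex ℝ Y)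
    (f : EuclideanSpace ℝ (Fin m) → EuclideanSpace ℝ (Fin n) → ℝ)
    (hf : Continuous fun p : EuclideanSpace ℝ (Fin m) × EuclideanSpace ℝ (Fin n) => f p.1 p.2)
    (hfx : ∀ y ∈ Y, ConvexOn ℝ X fun x => f x y)
    (hfy : ∀ x ∈ X, ConcaveOn ℝ Y fun y => f x y)
    (T : ℕ) (hT : 1 ≤ T)
    (x : Fin T → EuclideanSpace ℝ (Fin m)) (y : Fin T → EuclideanSpace ℝ (Fin n))
    (hx : ∀ t, x t ∈ X) (hy : ∀ t, y t ∈ Y)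
    (xbar : EuclideanSpace ℝ (Fin m)) (hxbar : xbar = (T : ℝ)⁻¹ • ∑ t, x t)
    (ybar : EuclideanSpace ℝ (Fin n)) (hybar : ybar = (T : ℝ)⁻¹ • ∑ t, y t)
    (r₁ r₂ : ℝ)
    (hr₁ : r₁ = ∑ t, f (x t) (y t) - sInf ((fun x' => ∑ t, f x' (y t)) '' X))
    (hr₂ : r₂ = sSup ((fun y' => ∑ t, f (x t) y') '' Y) - ∑ t, f (x t) (y t)) :
    0 ≤ sSup ((f xbar) '' Y) - sInf ((fun x' => f x' ybar) '' X) ∧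
    sSup ((f xbar) '' Y) - sInf ((fun x' => f x' ybar) '' X) ≤ (r₁ + r₂) / T :=
  duality_gap_le_avg_sum_regrets_general X Y hXcp hXcv hYcp hYcv f hf hfx hfy T hT x y hx hy xbar
    hxbar ybar hybar r₁ r₂ hr₁ hr₂
end

section
/- Let D ⊆ ℝ^d be a nonempty compact convex set, let N : ℝ^d → ℝ be a norm (i.e., N(u+v) ≤ N(u)+N(v), N(c·u) = |c|·N(u) for all c ∈ ℝ, and N(u) = 0 implies u = 0), and let N*(v) := sup{⟨v,u⟩ : u ∈ ℝ^d, N(u) ≤ 1} be its dual norm, where ⟨·,·⟩ is the standard inner product. Let Φ : ℝ^d → ℝ be continuous and 1-strongly convex with respect to N on D, meaning Φ(λx+(1−λ)y) ≤ λΦ(x) + (1−λ)Φ(y) − (1/2)λ(1−λ)N(x−y)² for all x,y ∈ D and λ ∈ [0,1]. Let η > 0, let f^1,…,f^T : ℝ^d → ℝ be concave and differentiable, and define iterates x^1,…,x^T ∈ D and vectors m^t := ∇f^t(x^t) for 1 ≤ t ≤ T, with the conventions m^0 := 0 and x^0 := x^1, by requiring that for each t ∈ {0,1,…,T−1}, x^{t+1}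 is a maximizer over D of the map x ↦ η⟨∑_{k=1}^t m^k + m^t, x⟩ − Φ(x). Then for every x ∈ D: ∑_{t=1}^T ( f^t(x) − f^t(x^t) ) ≤ R/η + η ∑_{t=1}^T N*(m^t − m^{t−1})² − (1/(4η)) ∑_{t=1}^T N(x^t − x^{t−1})², where R := sup_{u∈D} Φ(u) − inf_{u∈D} Φ(u). -/
/-- The dual norm of `N` with respect to the standard inner product on `ℝ^d`. -/
noncomputable def dualNorm {d : ℕ} (N : EuclideanSpace ℝ (Fin d) → ℝ)
    (v : EuclideanSpace ℝ (Fin d)) : ℝ :=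
  sSup {r : ℝ | ∃ u : EuclideanSpace ℝ (Fin d), N u ≤ 1 ∧ r = (inner ℝ v u : ℝ)}

/-!
Let `y t` maximise the non-optimistic FTRL objective `G_t(z) = η⟪M_t, z⟫ - Φ z`, where
`M_t = m^1 + ⋯ + m^t`. Strong convexity makes every maximiser `w` of such an objective satisfy
`G(z) + ½ N(z - w)² ≤ G(w)` on `D`. Comparing `x t` (the maximiser for `M_{t-1} + m^{t-1}`) with
`y t` (the maximiser for `M_{t-1} + m^t`) in this way and using `⟪v, u⟫ ≤ N*(v) N(u)` gives
`G_t(y t) + ½ N(y t - x t)² ≤ G_t(x t) + η² N*(m^t - m^{t-1})²`; combined with the growth of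
`G_{t-1}` at `y (t-1)` and the triangle inequality through `y (t-1)`, the potential
`G_t(y t) + ½ N(y t - x t)²` increases by at most `η⟪m^t, x t⟫ + η² N*(m^t - m^{t-1})²
- ¼ N(x t - x (t-1))²` per round. Telescoping, bounding `G_T(xs) ≤ G_T(y T)` and using concavity,
`f^t(xs) - f^t(x t) ≤ ⟪m^t, xs - x t⟫`, yields the bound.
-/

open Set Filter Topology
open scoped RealInnerProductSpace

theorem sub_le_sSup_image_sub_sInf_image {α : Type*} [TopologicalSpace α] {D : Set α}
    {Φ : α → ℝ} (hD : IsCompact D) (hΦ : ContinuousOn Φ D) {u v : α} (hu : u ∈ D) (hv : v ∈ D) :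
    Φ u - Φ v ≤ sSup (Φ '' D) - sInf (Φ '' D) := by
  have hK := hD.image_of_continuousOn hΦ
  linarith [le_csSup hK.bddAbove (mem_image_of_mem Φ hu),
    csInf_le hK.bddBelow (mem_image_of_mem Φ hv)]

section Seminorm

variable {E : Type*} [NormedAddCommGroup E] [NormedSpace ℝ E] [FiniteDimensional ℝ E]

theorem Seminorm.continuous_of_finiteDimensional (p : Seminorm ℝ E) : Continuous p :=
  continuousOn_univ.1 (p.convexOn.continuousOn isOpen_univ)

theorem Seminorm.exists_pos_mul_norm_le (p : Seminorm ℝ E) (hp : ∀ u, p u = 0 → u = 0) :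
    ∃ c > 0, ∀ u, c * ‖u‖ ≤ p u := by
  suffices h : ∃ c > 0, ∀ w ∈ Metric.sphere (0 : E) 1, c ≤ p w by
    obtain ⟨c, hc, hsphere⟩ := h
    refine ⟨c, hc, fun u => ?_⟩
    rcases eq_or_ne u 0 with rfl | hu
    · simp
    have hnu : 0 < ‖u‖ := norm_pos_iff.2 hu
    have := hsphere (‖u‖⁻¹ • u) (by simp [norm_smul, hnu.ne'])
    rw [map_smul_eq_mul, norm_inv, norm_norm, le_inv_mul_iff₀ hnu] at this
    linarith
  rcases (Metric.sphere (0 : E) 1).eq_empty_or_nonempty with hempty | hne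
  · exact ⟨1, one_pos, by simp [hempty]⟩
  obtain ⟨w, hw, hmin⟩ := (isCompact_sphere (0 : E) 1).exists_isMinOn hne
    p.continuous_of_finiteDimensional.continuousOn
  have hw0 : w ≠ 0 := by rintro rfl; simp at hw
  exact ⟨p w, (apply_nonneg p w).lt_of_ne' (mt (hp w) hw0), fun z hz => hmin hz⟩

end Seminorm

section DualNorm

variable {d : ℕ} (p : Seminorm ℝ (EuclideanSpace ℝ (Fin d))) (hp : ∀ u, p u = 0 → u = 0)
include hp

theorem bddAbove_inner_seminorm_le_one (v : EuclideanSpace ℝ (Fin d)) :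
    BddAbove {r : ℝ | ∃ u, p u ≤ 1 ∧ r = ⟪v, u⟫} := by
  obtain ⟨c, hc, hle⟩ := p.exists_pos_mul_norm_le hp
  refine ⟨‖v‖ * c⁻¹, ?_⟩
  rintro _ ⟨u, hu, rfl⟩
  have hnu : ‖u‖ ≤ c⁻¹ := by rw [← one_div, le_div_iff₀ hc]; linarith [hle u]
  exact (real_inner_le_norm v u).trans (by gcongr)

theorem inner_le_dualNorm_mul (v u : EuclideanSpace ℝ (Fin d)) :
    ⟪v, u⟫ ≤ dualNorm p v * p u := by
  rcases (apply_nonneg p u).eq_or_lt with hu | hu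
  · simp [hp u hu.symm]
  have hmem : ⟪v, (p u)⁻¹ • u⟫ ∈ {r : ℝ | ∃ w, p w ≤ 1 ∧ r = ⟪v, w⟫} :=
    ⟨(p u)⁻¹ • u, by rw [map_smul_eq_mul, Real.norm_eq_abs, abs_inv, abs_of_pos hu,
      inv_mul_cancel₀ hu.ne'], rfl⟩
  have := le_csSup (bddAbove_inner_seminorm_le_one p hp v) hmem
  rwa [real_inner_smul_right, inv_mul_le_iff₀ hu, mul_comm] at this

end DualNorm

section FTRL

variable {E : Type*} [NormedAddCommGroup E] [InnerProductSpace ℝ E]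

theorem ConcaveOn.sub_le_inner_gradient [CompleteSpace E] {f : E → ℝ}
    (hf : ConcaveOn ℝ Set.univ f) {p : E} (hfp : DifferentiableAt ℝ f p) (q : E) :
    f q - f p ≤ ⟪gradient f p, q - p⟫ := by
  have hline : ConcaveOn ℝ univ (f ∘ AffineMap.lineMap (k := ℝ) p q) := by
    simpa using hf.comp_affineMap (AffineMap.lineMap (k := ℝ) p q)
  have hderiv : HasDerivAt (f ∘ AffineMap.lineMap (k := ℝ) p q) ⟪gradient f p, q - p⟫ 0 := by
    have hfp' : HasFDerivAt f (InnerProductSpace.toDual ℝ E (gradient f p))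
        (AffineMap.lineMap (k := ℝ) p q 0) := by
      simpa using hfp.hasGradientAt.hasFDerivAt
    simpa using hfp'.comp_hasDerivAt (0 : ℝ) AffineMap.hasDerivAt_lineMap
  simpa [slope_def_field] using
    hline.slope_le_of_hasDerivAt (mem_univ 0) (mem_univ 1) zero_lt_one hderiv

def StrongConvexOnWrt (D : Set E) (N Φ : E → ℝ) : Prop :=
  ∀ x ∈ D, ∀ y ∈ D, ∀ θ ∈ Icc (0 : ℝ) 1,
    Φ (θ • x + (1 - θ) • y) ≤ θ * Φ x + (1 - θ) * Φ y - (1/2) * θ * (1 - θ) * (N (x - y))^2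

def ftrlObjective (η : ℝ) (Φ : E → ℝ) (a : E) (z : E) : ℝ := η * ⟪a, z⟫ - Φ z

variable {D : Set E} {N Φ : E → ℝ} {η : ℝ}

theorem ftrlObjective_add (a b z : E) :
    ftrlObjective η Φ (a + b) z = ftrlObjective η Φ a z + η * ⟪b, z⟫ := by
  simp only [ftrlObjective, inner_add_left]; ring

theorem exists_isMaxOn_ftrlObjective (hD : IsCompact D) (hDne : D.Nonempty)
    (hΦ : Continuous Φ) (a : E) : ∃ y ∈ D, IsMaxOn (ftrlObjective η Φ a) D y :=
  hD.exists_isMaxOn hDne (by unfold ftrlObjective; fun_prop)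

theorem StrongConvexOnWrt.ftrlObjective_add_sq_le (hΦ : StrongConvexOnWrt D N Φ)
    (hD : Convex ℝ D) {a x z : E} (hx : x ∈ D) (hmax : IsMaxOn (ftrlObjective η Φ a) D x)
    (hz : z ∈ D) :
    ftrlObjective η Φ a z + 1/2 * N (z - x) ^ 2 ≤ ftrlObjective η Φ a x := by
  set G := ftrlObjective η Φ a
  have hsegment : ∀ θ ∈ Ioo (0 : ℝ) 1, G z + 1/2 * (1 - θ) * N (z - x) ^ 2 ≤ G x := by
    rintro θ ⟨hθ0, hθ1⟩
    have hmem : θ • z + (1 - θ) • x ∈ D := hD hz hx hθ0.le (by linarith) (by ring)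
    have hΦθ := hΦ z hz x hx θ ⟨hθ0.le, hθ1.le⟩
    have hGθ := isMaxOn_iff.1 hmax _ hmem
    have key : θ * (G z + 1/2 * (1 - θ) * N (z - x) ^ 2 - G x) ≤ 0 := by
      simp only [G, ftrlObjective, inner_add_right, real_inner_smul_right] at hGθ ⊢
      linear_combination hGθ + hΦθ
    linarith [nonpos_of_mul_nonpos_right key hθ0]
  have hlim : Tendsto (fun θ : ℝ => G z + 1/2 * (1 - θ) * N (z - x) ^ 2) (𝓝[>] 0)
      (𝓝 (G z + 1/2 * (1 - 0) * N (z - x) ^ 2)) :=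
    ((Continuous.tendsto (by fun_prop) 0)).mono_left nhdsWithin_le_nhds
  simpa using le_of_tendsto hlim (eventually_of_mem (Ioo_mem_nhdsGT one_pos) hsegment)

end FTRL

section OFTRL

variable {d : ℕ} {D : Set (EuclideanSpace ℝ (Fin d))} {p : Seminorm ℝ (EuclideanSpace ℝ (Fin d))}
  {Φ : EuclideanSpace ℝ (Fin d) → ℝ} {η : ℝ}
  (hΦ : StrongConvexOnWrt D p Φ) (hD : Convex ℝ D) (hp : ∀ u, p u = 0 → u = 0) (hη : 0 < η)
include hΦ hD hp hη

theorem StrongConvexOnWrt.ftrlObjective_add_sq_le_add_dualNorm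
    {a b x y : EuclideanSpace ℝ (Fin d)} (hx : x ∈ D) (hxmax : IsMaxOn (ftrlObjective η Φ a) D x)
    (hy : y ∈ D) (hymax : IsMaxOn (ftrlObjective η Φ b) D y) :
    ftrlObjective η Φ b y + 1/2 * p (y - x) ^ 2 ≤
      ftrlObjective η Φ b x + η ^ 2 * dualNorm p (b - a) ^ 2 := by
  obtain ⟨δ, rfl⟩ : ∃ δ, b = a + δ := ⟨b - a, by abel⟩
  have hgrowth_a := hΦ.ftrlObjective_add_sq_le hD hx hxmax hy
  have hgrowth_b := hΦ.ftrlObjective_add_sq_le hD hy hymax hx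
  have hdual := inner_le_dualNorm_mul p hp δ (y - x)
  rw [map_sub_rev, ftrlObjective_add, ftrlObjective_add] at hgrowth_b
  rw [ftrlObjective_add, ftrlObjective_add, add_sub_cancel_left]
  rw [inner_sub_right] at hdual
  -- AM-GM on `p (y - x) ^ 2 ≤ η ⟪δ, y - x⟫ ≤ η N*(δ) p (y - x)`.
  nlinarith [sq_nonneg (η * dualNorm p δ - p (y - x)),
    mul_le_mul_of_nonneg_left hdual hη.le]

theorem StrongConvexOnWrt.oftrl_step_le
    {M m m' xPrev z x' y' : EuclideanSpace ℝ (Fin d)}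
    (hz : ftrlObjective η Φ M x' + 1/2 * p (x' - z) ^ 2 ≤ ftrlObjective η Φ M z)
    (hx' : x' ∈ D) (hx'max : IsMaxOn (ftrlObjective η Φ (M + m)) D x')
    (hy' : y' ∈ D) (hy'max : IsMaxOn (ftrlObjective η Φ (M + m')) D y') :
    ftrlObjective η Φ (M + m') y' + 1/2 * p (y' - x') ^ 2 + 1/4 * p (x' - xPrev) ^ 2 ≤
      ftrlObjective η Φ M z + 1/2 * p (z - xPrev) ^ 2 + η * ⟪m', x'⟫ +
        η ^ 2 * dualNorm p (m' - m) ^ 2 := by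
  have hstab := hΦ.ftrlObjective_add_sq_le_add_dualNorm hD hp hη hx' hx'max hy' hy'max
  rw [add_sub_add_left_eq_sub, ftrlObjective_add M m' x'] at hstab
  have htri : p (x' - xPrev) ≤ p (x' - z) + p (z - xPrev) := by
    simpa using map_add_le_add p (x' - z) (z - xPrev)
  nlinarith [apply_nonneg p (x' - xPrev), sq_nonneg (p (x' - z) - p (z - xPrev))]

theorem StrongConvexOnWrt.oftrl_potential_le
    {T : ℕ} {x m y : ℕ → EuclideanSpace ℝ (Fin d)} (hx0 : x 0 = x 1)
    (hx : ∀ t < T, x (t + 1) ∈ D ∧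
      IsMaxOn (ftrlObjective η Φ (∑ k ∈ Finset.Icc 1 t, m k + m t)) D (x (t + 1)))
    (hyD : ∀ t, y t ∈ D)
    (hy : ∀ t, IsMaxOn (ftrlObjective η Φ (∑ k ∈ Finset.Icc 1 t, m k)) D (y t)) :
    ∀ n < T, ftrlObjective η Φ (∑ k ∈ Finset.Icc 1 (n + 1), m k) (y (n + 1)) +
        1/2 * p (y (n + 1) - x (n + 1)) ^ 2 +
        1/4 * ∑ t ∈ Finset.Icc 1 (n + 1), p (x t - x (t - 1)) ^ 2 ≤
      -Φ (x 1) + η * ∑ t ∈ Finset.Icc 1 (n + 1), ⟪m t, x t⟫ +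
        η ^ 2 * ∑ t ∈ Finset.Icc 1 (n + 1), dualNorm p (m t - m (t - 1)) ^ 2 := by
  intro n hn
  induction n with
  | zero =>
    -- In the first round `x 1 = x 0` plays the role of the anchor `y 0`.
    have hstep := hΦ.oftrl_step_le hD hp hη (M := 0) (xPrev := x 0) (z := x 1) (by simp)
      (hx 0 hn).1 (by simpa using (hx 0 hn).2) (hyD 1) (by simpa using hy 1)
    simp only [ftrlObjective, zero_add, Finset.Icc_self, Finset.sum_singleton, hx0, sub_self,
      map_zero, inner_zero_left] at hstep ⊢
    linarith
  | succ n ih =>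
    have hgrowth := hΦ.ftrlObjective_add_sq_le hD (hyD (n + 1)) (hy (n + 1)) (hx (n + 1) hn).1
    have hone_le : 1 ≤ n + 1 + 1 := by omega
    have hstep := hΦ.oftrl_step_le hD hp hη (xPrev := x (n + 1)) hgrowth (hx (n + 1) hn).1
      (hx (n + 1) hn).2 (hyD (n + 2)) (Finset.sum_Icc_succ_top hone_le m ▸ hy (n + 2))
    simp only [Finset.sum_Icc_succ_top hone_le, add_tsub_cancel_right]
    linarith [ih (by omega)]

end OFTRL

theorem oftrl_rvu_bound_general
    {d : ℕ} (D : Set (EuclideanSpace ℝ (Fin d)))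
    (hDne : D.Nonempty) (hDcp : IsCompact D) (hDcv : Convex ℝ D)
    (N : EuclideanSpace ℝ (Fin d) → ℝ)
    (hNadd : ∀ u v, N (u + v) ≤ N u + N v)
    (hNsmul : ∀ (c : ℝ) u, N (c • u) = |c| * N u)
    (hNdef : ∀ u, N u = 0 → u = 0)
    (Φ : EuclideanSpace ℝ (Fin d) → ℝ) (hΦcont : Continuous Φ)
    (hΦsc : ∀ x ∈ D, ∀ y ∈ D, ∀ θ ∈ Set.Icc (0 : ℝ) 1,
      Φ (θ • x + (1 - θ) • y) ≤ θ * Φ x + (1 - θ) * Φ y - (1/2) * θ * (1 - θ) * (N (x - y))^2)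
    (η : ℝ) (hη : 0 < η)
    (T : ℕ)
    (f : ℕ → EuclideanSpace ℝ (Fin d) → ℝ)
    (hfconc : ∀ t, 1 ≤ t → t ≤ T → ConcaveOn ℝ Set.univ (f t))
    (hfdiff : ∀ t, 1 ≤ t → t ≤ T → Differentiable ℝ (f t))
    (x mvec : ℕ → EuclideanSpace ℝ (Fin d))
    (hx0 : x 0 = x 1)
    (hm : ∀ t, 1 ≤ t → t ≤ T → mvec t = gradient (f t) (x t))
    (hupdate : ∀ t < T, x (t + 1) ∈ D ∧ ∀ z ∈ D,
      η * (inner ℝ (∑ k ∈ Finset.Icc 1 t, mvec k + mvec t) z : ℝ) - Φ z ≤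
        η * (inner ℝ (∑ k ∈ Finset.Icc 1 t, mvec k + mvec t) (x (t + 1)) : ℝ) - Φ (x (t + 1)))
    (R : ℝ) (hR : R = sSup (Φ '' D) - sInf (Φ '' D)) :
    ∀ xs ∈ D,
      ∑ t ∈ Finset.Icc 1 T, (f t xs - f t (x t)) ≤
        R / η + η * ∑ t ∈ Finset.Icc 1 T, (dualNorm N (mvec t - mvec (t - 1)))^2
          - (1 / (4 * η)) * ∑ t ∈ Finset.Icc 1 T, (N (x t - x (t - 1)))^2 := by
  intro xs hxs
  obtain ⟨p, rfl⟩ : ∃ p : Seminorm ℝ (EuclideanSpace ℝ (Fin d)), ⇑p = N :=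
    ⟨Seminorm.of N hNadd fun c u => by rw [Real.norm_eq_abs, hNsmul], rfl⟩
  have hspread : ∀ u ∈ D, Φ xs - Φ u ≤ R := fun u hu =>
    hR ▸ sub_le_sSup_image_sub_sInf_image hDcp hΦcont.continuousOn hxs hu
  obtain _ | n := T
  · simpa using div_nonneg (by simpa using hspread xs hxs) hη.le
  choose y hyD hy using fun t =>
    exists_isMaxOn_ftrlObjective hDcp hDne hΦcont (η := η) (∑ k ∈ Finset.Icc 1 t, mvec k)
  have hpot := StrongConvexOnWrt.oftrl_potential_le hΦsc hDcv hNdef hη hx0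
    (fun t ht => ⟨(hupdate t ht).1, isMaxOn_iff.2 (hupdate t ht).2⟩) hyD hy n n.lt_succ_self
  have hregret : ∑ t ∈ Finset.Icc 1 (n + 1), (f t xs - f t (x t)) ≤
      ∑ t ∈ Finset.Icc 1 (n + 1), ⟪mvec t, xs⟫ - ∑ t ∈ Finset.Icc 1 (n + 1), ⟪mvec t, x t⟫ := by
    rw [← Finset.sum_sub_distrib]
    refine Finset.sum_le_sum fun t ht => ?_
    obtain ⟨ht1, htT⟩ := Finset.mem_Icc.1 ht
    rw [hm t ht1 htT, ← inner_sub_right]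
    exact (hfconc t ht1 htT).sub_le_inner_gradient (hfdiff t ht1 htT _) xs
  have hxs_le := isMaxOn_iff.1 (hy (n + 1)) xs hxs
  have hx1 := hspread (x 1) (hupdate 0 n.succ_pos).1
  simp only [ftrlObjective, sum_inner] at hpot hxs_le
  rw [← mul_le_mul_iff_of_pos_left hη]
  field_simp
  linarith [mul_le_mul_of_nonneg_left hregret hη.le, sq_nonneg (p (y (n + 1) - x (n + 1)))]

/-- The RVU (regret bounded by variation in utilities) bound for Optimistic
Follow-The-Regularized-Leader with predictor equal to the previous payoff vector. -/
theorem oftrl_rvu_bound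
    {d : ℕ} (D : Set (EuclideanSpace ℝ (Fin d)))
    (hDne : D.Nonempty) (hDcp : IsCompact D) (hDcv : Convex ℝ D)
    (N : EuclideanSpace ℝ (Fin d) → ℝ)
    (hNadd : ∀ u v, N (u + v) ≤ N u + N v)
    (hNsmul : ∀ (c : ℝ) u, N (c • u) = |c| * N u)
    (hNdef : ∀ u, N u = 0 → u = 0)
    (Φ : EuclideanSpace ℝ (Fin d) → ℝ) (hΦcont : Continuous Φ)
    (hΦsc : ∀ x ∈ D, ∀ y ∈ D, ∀ θ ∈ Set.Icc (0 : ℝ) 1,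
      Φ (θ • x + (1 - θ) • y) ≤ θ * Φ x + (1 - θ) * Φ y - (1/2) * θ * (1 - θ) * (N (x - y))^2)
    (η : ℝ) (hη : 0 < η)
    (T : ℕ)
    (f : ℕ → EuclideanSpace ℝ (Fin d) → ℝ)
    (hfconc : ∀ t, 1 ≤ t → t ≤ T → ConcaveOn ℝ Set.univ (f t))
    (hfdiff : ∀ t, 1 ≤ t → t ≤ T → Differentiable ℝ (f t))
    (x mvec : ℕ → EuclideanSpace ℝ (Fin d))
    (hm0 : mvec 0 = 0)
    (hx0 : x 0 = x 1)
    (hm : ∀ t, 1 ≤ t → t ≤ T → mvec t = gradient (f t) (x t))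
    (hupdate : ∀ t < T, x (t + 1) ∈ D ∧ ∀ z ∈ D,
      η * (inner ℝ (∑ k ∈ Finset.Icc 1 t, mvec k + mvec t) z : ℝ) - Φ z ≤
        η * (inner ℝ (∑ k ∈ Finset.Icc 1 t, mvec k + mvec t) (x (t + 1)) : ℝ) - Φ (x (t + 1)))
    (R : ℝ) (hR : R = sSup (Φ '' D) - sInf (Φ '' D)) :
    ∀ xs ∈ D,
      ∑ t ∈ Finset.Icc 1 T, (f t xs - f t (x t)) ≤
        R / η + η * ∑ t ∈ Finset.Icc 1 T, (dualNorm N (mvec t - mvec (t - 1)))^2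
          - (1 / (4 * η)) * ∑ t ∈ Finset.Icc 1 T, (N (x t - x (t - 1)))^2 :=
  oftrl_rvu_bound_general D hDne hDcp hDcv N hNadd hNsmul hNdef Φ hΦcont hΦsc η hη T f hfconc hfdiff
    x mvec hx0 hm hupdate R hR
end

section
/- Fix an integer N ≥ 1 (the number of players). For each player i ∈ {1,…,N}, let D_i ⊆ ℝ^{d_i} be a nonempty set, let N_i : ℝ^{d_i} → ℝ be a norm with dual norm N_i*(v) := sup{⟨v,u⟩ : N_i(u) ≤ 1}, and let R_i ≥ 0 and L_i ≥ 0 be constants with ∑_{j=1}^N L_j² > 0. Let x^0, x^1, …, x^T be a sequence of joint strategies with x^t = (x_1^t,…,x_N^t) ∈ ∏_j D_j, and let m_i : ∏_j D_j → ℝ^{d_i} be payoff-vector maps satisfying the Lipschitz condition N_i*( m_i(x) − m_i(y) ) ≤ L_i ∑_{j=1}^N N_j( x_j − y_j ) for all joint strategies x, y. Set η := 1/(2√(N ∑_{j=1}^N L_j²)) and m_i^t := m_i(x^t). Suppose real numbers r_1(T),…,r_N(T) satisfy, for each i, the RVU bound r_i(T) ≤ R_i/η + η ∑_{t=1}^T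 N_i*( m_i^t − m_i^{t−1} )² − (1/(4η)) ∑_{t=1}^T N_i( x_i^t − x_i^{t−1} )². Then the sum of regrets is bounded by a constant independent of T: ∑_{i=1}^N r_i(T) ≤ 2 (∑_{i=1}^N R_i) · √( N ∑_{i=1}^N L_i² ). -/
open Finset

theorem dualNorm_nonneg {d : ℕ} {N : EuclideanSpace ℝ (Fin d) → ℝ} (h0 : N 0 ≤ 1)
    (v : EuclideanSpace ℝ (Fin d)) : 0 ≤ dualNorm N v :=
  Real.sSup_nonneg' ⟨0, ⟨0, h0, by simp⟩, le_rfl⟩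

theorem sq_le_card_mul_sq_mul_sum_sq_of_le_mul_sum {ι : Type*} [Fintype ι] {a L : ℝ}
    {y : ι → ℝ} (ha : 0 ≤ a) (h : a ≤ L * ∑ j, y j) :
    a ^ 2 ≤ Fintype.card ι * L ^ 2 * ∑ j, y j ^ 2 :=
  calc a ^ 2 ≤ (L * ∑ j, y j) ^ 2 := pow_le_pow_left₀ ha h 2
    _ = L ^ 2 * (∑ j, y j) ^ 2 := mul_pow _ _ _
    _ ≤ L ^ 2 * (Fintype.card ι * ∑ j, y j ^ 2) := by
      gcongr; simpa using sq_sum_le_card_mul_sum_sq (s := univ) (f := y)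
    _ = Fintype.card ι * L ^ 2 * ∑ j, y j ^ 2 := by ring

theorem sum_le_sum_div_of_rvu {ι τ : Type*} [Fintype ι] (s : Finset τ) {r R K : ι → ℝ}
    {a b : ι → τ → ℝ} {η : ℝ} (hη : 0 ≤ η) (hK : η * ∑ i, K i ≤ 1 / (4 * η))
    (hb : ∀ i, ∀ t ∈ s, 0 ≤ b i t) (hab : ∀ i, ∀ t ∈ s, a i t ≤ K i * ∑ j, b j t)
    (hr : ∀ i, r i ≤ R i / η + η * ∑ t ∈ s, a i t - 1 / (4 * η) * ∑ t ∈ s, b i t) :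
    ∑ i, r i ≤ ∑ i, R i / η := by
  have hmove : 0 ≤ ∑ t ∈ s, ∑ j, b j t :=
    sum_nonneg fun t ht => sum_nonneg fun j _ => hb j t ht
  have habsorb : η * ∑ i, ∑ t ∈ s, a i t ≤ 1 / (4 * η) * ∑ i, ∑ t ∈ s, b i t :=
    calc η * ∑ i, ∑ t ∈ s, a i t ≤ η * ∑ i, ∑ t ∈ s, K i * ∑ j, b j t := by
          gcongr with i _ t ht; exact hab i t ht
      _ = (η * ∑ i, K i) * ∑ t ∈ s, ∑ j, b j t := by
          rw [mul_assoc, sum_mul]; simp_rw [← mul_sum]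
      _ ≤ 1 / (4 * η) * ∑ t ∈ s, ∑ j, b j t := by gcongr
      _ = 1 / (4 * η) * ∑ i, ∑ t ∈ s, b i t := by rw [sum_comm]
  calc ∑ i, r i
      ≤ ∑ i, (R i / η + η * ∑ t ∈ s, a i t - 1 / (4 * η) * ∑ t ∈ s, b i t) :=
        sum_le_sum fun i _ => hr i
    _ = ∑ i, R i / η + (η * ∑ i, ∑ t ∈ s, a i t - 1 / (4 * η) * ∑ i, ∑ t ∈ s, b i t) := by
        simp only [sum_add_distrib, sum_sub_distrib, mul_sum]; ring
    _ ≤ ∑ i, R i / η := by linarith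

-- For `c = 0` both sides are `0`, since `1 / 0 = 0`.
theorem one_div_two_sqrt_mul_eq {c : ℝ} (hc : 0 ≤ c) :
    1 / (2 * Real.sqrt c) * c = 1 / (4 * (1 / (2 * Real.sqrt c))) := by
  rcases hc.eq_or_lt with rfl | hc
  · simp
  have hs : 0 < Real.sqrt c := Real.sqrt_pos.2 hc
  have hsq : Real.sqrt c ^ 2 = c := Real.sq_sqrt hc.le
  field_simp
  linarith

theorem sum_of_regrets_bound_general
    (N : ℕ) (T : ℕ)
    (d : Fin N → ℕ)
    (D : ∀ i, Set (EuclideanSpace ℝ (Fin (d i))))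
    (Nrm : ∀ i, EuclideanSpace ℝ (Fin (d i)) → ℝ)
    (hNsmul : ∀ i (c : ℝ) (u : EuclideanSpace ℝ (Fin (d i))), Nrm i (c • u) = |c| * Nrm i u)
    (R L : Fin N → ℝ)
    (x : ℕ → ∀ j, EuclideanSpace ℝ (Fin (d j)))
    (hx : ∀ t ≤ T, ∀ j, x t j ∈ D j)
    (mv : ∀ i, (∀ j, EuclideanSpace ℝ (Fin (d j))) → EuclideanSpace ℝ (Fin (d i)))
    (hLip : ∀ i, ∀ a b : ∀ j, EuclideanSpace ℝ (Fin (d j)),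
      (∀ j, a j ∈ D j) → (∀ j, b j ∈ D j) →
      dualNorm (Nrm i) (mv i a - mv i b) ≤ L i * ∑ j, Nrm j (a j - b j))
    (η : ℝ) (hη : η = 1 / (2 * Real.sqrt (N * ∑ j, (L j)^2)))
    (r : Fin N → ℝ)
    (hRVU : ∀ i, r i ≤ R i / η
      + η * ∑ t ∈ Finset.Icc 1 T, (dualNorm (Nrm i) (mv i (x t) - mv i (x (t - 1))))^2
      - (1 / (4 * η)) * ∑ t ∈ Finset.Icc 1 T, (Nrm i (x t i - x (t - 1) i))^2) :
    ∑ i, r i ≤ 2 * (∑ i, R i) * Real.sqrt (N * ∑ i, (L i)^2) := by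
  have hNrm0 : ∀ i, Nrm i 0 ≤ 1 := fun i =>
    (by simpa using hNsmul i 0 0 : Nrm i 0 = 0).trans_le zero_le_one
  have hvariation : ∀ i, ∀ t ∈ Icc 1 T,
      dualNorm (Nrm i) (mv i (x t) - mv i (x (t - 1))) ^ 2
        ≤ N * L i ^ 2 * ∑ j, Nrm j (x t j - x (t - 1) j) ^ 2 := by
    intro i t ht
    have htT := (mem_Icc.1 ht).2
    simpa using sq_le_card_mul_sq_mul_sum_sq_of_le_mul_sum (dualNorm_nonneg (hNrm0 i) _)
      (hLip i _ _ (hx t htT) (hx (t - 1) (by omega)))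
  have hbalance : η * ∑ i, (N : ℝ) * L i ^ 2 ≤ 1 / (4 * η) := by
    rw [← mul_sum, hη]; exact (one_div_two_sqrt_mul_eq (by positivity)).le
  calc ∑ i, r i ≤ ∑ i, R i / η :=
        sum_le_sum_div_of_rvu _ (by rw [hη]; positivity) hbalance
          (fun _ _ _ => sq_nonneg _) hvariation hRVU
    _ = 2 * (∑ i, R i) * Real.sqrt (N * ∑ i, (L i)^2) := by
        rw [← sum_div, hη, div_div_eq_mul_div, div_one]; ring

/-- If every player's regret satisfies the RVU bound and the payoff vectors are
Lipschitz, the sum of regrets is bounded by a constant independent of `T`. -/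
theorem sum_of_regrets_bound
    (N : ℕ) (hN : 1 ≤ N) (T : ℕ)
    (d : Fin N → ℕ)
    (D : ∀ i, Set (EuclideanSpace ℝ (Fin (d i))))
    (hDne : ∀ i, (D i).Nonempty)
    (Nrm : ∀ i, EuclideanSpace ℝ (Fin (d i)) → ℝ)
    (hNadd : ∀ i (u v : EuclideanSpace ℝ (Fin (d i))), Nrm i (u + v) ≤ Nrm i u + Nrm i v)
    (hNsmul : ∀ i (c : ℝ) (u : EuclideanSpace ℝ (Fin (d i))), Nrm i (c • u) = |c| * Nrm i u)
    (hNdef : ∀ i (u : EuclideanSpace ℝ (Fin (d i))), Nrm i u = 0 → u = 0)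
    (R L : Fin N → ℝ) (hR : ∀ i, 0 ≤ R i) (hL : ∀ i, 0 ≤ L i)
    (hLpos : 0 < ∑ j, (L j)^2)
    (x : ℕ → ∀ j, EuclideanSpace ℝ (Fin (d j)))
    (hx : ∀ t ≤ T, ∀ j, x t j ∈ D j)
    (mv : ∀ i, (∀ j, EuclideanSpace ℝ (Fin (d j))) → EuclideanSpace ℝ (Fin (d i)))
    (hLip : ∀ i, ∀ a b : ∀ j, EuclideanSpace ℝ (Fin (d j)),
      (∀ j, a j ∈ D j) → (∀ j, b j ∈ D j) →
      dualNorm (Nrm i) (mv i a - mv i b) ≤ L i * ∑ j, Nrm j (a j - b j))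
    (η : ℝ) (hη : η = 1 / (2 * Real.sqrt (N * ∑ j, (L j)^2)))
    (r : Fin N → ℝ)
    (hRVU : ∀ i, r i ≤ R i / η
      + η * ∑ t ∈ Finset.Icc 1 T, (dualNorm (Nrm i) (mv i (x t) - mv i (x (t - 1))))^2
      - (1 / (4 * η)) * ∑ t ∈ Finset.Icc 1 T, (Nrm i (x t i - x (t - 1) i))^2) :
    ∑ i, r i ≤ 2 * (∑ i, R i) * Real.sqrt (N * ∑ i, (L i)^2) :=
  sum_of_regrets_bound_general N T d D Nrm hNsmul R L x hx mv hLip η hη r hRVU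
end

section
/- Let n ≥ 1 and let W be an n×n complex Hermitian matrix with eigenvalues μ_1,…,μ_n. Then for every density matrix X (an n×n complex Hermitian positive semidefinite matrix with trace 1) with eigenvalues λ_1(X),…,λ_n(X): Re(tr(W·X)) + ∑_{i=1}^n negMulLog(λ_i(X)) ≤ log( ∑_{i=1}^n exp(μ_i) ), with equality when X = exp(W)/tr(exp(W)), where exp(W) is the matrix exponential of W; moreover exp(W)/tr(exp(W)) is itself a density matrix. -/
/-!
Diagonalise `X = V diag(λ) V*` and `W = U diag(μ) U*`. Then `Re tr(WX) = ∑ λᵢ wᵢ`, where the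
`wᵢ` are the diagonal entries of `V* W V`. These are averages of the `μₖ` with weights
`|(V* U)ᵢₖ|²`, a doubly stochastic matrix, so by Jensen `∑ exp wᵢ ≤ ∑ exp μₖ` (Peierls).
The classical Gibbs inequality for the probability vector `λ` against `exp wᵢ / ∑ exp μₖ` then
gives the bound. The Gibbs state is a function of `W`, so its energy, trace and entropy are
computed by the continuous functional calculus, and the bound becomes the softmax identity.
-/

open scoped ComplexOrder

open Matrix Finset

namespace Real

theorem negMulLog_add_mul_log_le {p q : ℝ} (hp : 0 ≤ p) (hq : 0 < q) :
    negMulLog p + p * log q ≤ q - p := by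
  have h := negMulLog_mul q (p / q)
  rw [mul_div_cancel₀ p hq.ne'] at h
  have hle := mul_le_mul_of_nonneg_left (negMulLog_le_one_sub_self (div_nonneg hp hq.le)) hq.le
  have h1 : p / q * negMulLog q = -(p * log q) := by rw [negMulLog]; field_simp
  have h2 : q * (1 - p / q) = q - p := by field_simp
  linarith

/-- Gibbs' inequality. -/
theorem sum_negMulLog_add_mul_log_le {ι : Type*} (s : Finset ι) {p q : ι → ℝ}
    (hp : ∀ i ∈ s, 0 ≤ p i) (hq : ∀ i ∈ s, 0 < q i) (hpq : ∑ i ∈ s, q i ≤ ∑ i ∈ s, p i) :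
    ∑ i ∈ s, (negMulLog (p i) + p i * log (q i)) ≤ 0 :=
  calc ∑ i ∈ s, (negMulLog (p i) + p i * log (q i))
      ≤ ∑ i ∈ s, (q i - p i) :=
        sum_le_sum fun i hi => negMulLog_add_mul_log_le (hp i hi) (hq i hi)
    _ ≤ 0 := by rw [sum_sub_distrib]; linarith

theorem sum_mul_add_sum_negMulLog_le_log {ι : Type*} (s : Finset ι) {p w : ι → ℝ} {S : ℝ}
    (hp : ∀ i ∈ s, 0 ≤ p i) (hp_sum : ∑ i ∈ s, p i = 1) (hS : 0 < S)
    (hwS : ∑ i ∈ s, exp (w i) ≤ S) :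
    ∑ i ∈ s, p i * w i + ∑ i ∈ s, negMulLog (p i) ≤ log S := by
  have h := sum_negMulLog_add_mul_log_le s hp (q := fun i => exp (w i) / S)
    (fun i _ => by positivity) (by rwa [← sum_div, hp_sum, div_le_one hS])
  simp only [log_div (exp_pos _).ne' hS.ne', log_exp, mul_sub, sum_add_distrib, sum_sub_distrib,
    ← sum_mul, hp_sum] at h
  linarith

theorem sum_mul_add_sum_negMulLog_eq_log_sum_exp {ι : Type*} (s : Finset ι) (hs : s.Nonempty)
    (w : ι → ℝ) :
    ∑ i ∈ s, ((∑ j ∈ s, exp (w j))⁻¹ * exp (w i)) * w i +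
      ∑ i ∈ s, negMulLog ((∑ j ∈ s, exp (w j))⁻¹ * exp (w i)) = log (∑ j ∈ s, exp (w j)) := by
  set Z := ∑ j ∈ s, exp (w j)
  have hZ : 0 < Z := sum_pos (fun j _ => exp_pos _) hs
  simp only [negMulLog, log_mul (inv_pos.2 hZ).ne' (exp_pos _).ne', log_inv, log_exp,
    ← sum_add_distrib]
  calc ∑ i ∈ s, (Z⁻¹ * exp (w i) * w i + -(Z⁻¹ * exp (w i)) * (-log Z + w i))
      = ∑ i ∈ s, Z⁻¹ * exp (w i) * log Z := sum_congr rfl fun i _ => by ring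
    _ = Z⁻¹ * Z * log Z := by rw [← sum_mul, ← mul_sum]
    _ = log Z := by rw [inv_mul_cancel₀ hZ.ne', one_mul]

end Real

theorem ConvexOn.sum_comp_mulVec_le_of_mem_doublyStochastic {𝕜 ι : Type*} [Field 𝕜]
    [LinearOrder 𝕜] [IsStrictOrderedRing 𝕜] [Fintype ι] [DecidableEq ι] {s : Set 𝕜}
    {f : 𝕜 → 𝕜} (hf : ConvexOn 𝕜 s f) {M : Matrix ι ι 𝕜} (hM : M ∈ doublyStochastic 𝕜 ι)
    {x : ι → 𝕜} (hx : ∀ j, x j ∈ s) :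
    ∑ i, f ((M *ᵥ x) i) ≤ ∑ j, f (x j) :=
  calc ∑ i, f ((M *ᵥ x) i)
      ≤ ∑ i, ∑ j, M i j * f (x j) := sum_le_sum fun i _ => by
        simpa [mulVec, dotProduct] using hf.map_sum_le (t := univ)
          (fun j _ => nonneg_of_mem_doublyStochastic hM) (sum_row_of_mem_doublyStochastic hM i)
          (fun j _ => hx j)
    _ = ∑ j, f (x j) := by
        rw [sum_comm]
        simp [← sum_mul, sum_col_of_mem_doublyStochastic hM]

section Matrix

variable {𝕜 n : Type*} [RCLike 𝕜] [Fintype n] [DecidableEq n]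

theorem Matrix.of_norm_sq_mem_doublyStochastic_of_mem_unitary {U : Matrix n n 𝕜}
    (hU : U ∈ unitary (Matrix n n 𝕜)) :
    of (fun i j => ‖U i j‖ ^ 2) ∈ doublyStochastic ℝ n := by
  refine mem_doublyStochastic_iff_sum.2 ⟨fun _ _ => by simp, fun i => ?_, fun j => ?_⟩
  · have h : (U * star U) i i = (1 : Matrix n n 𝕜) i i := by rw [Unitary.mul_star_self_of_mem hU]
    simp only [mul_apply, star_apply, RCLike.star_def, RCLike.mul_conj, one_apply_eq] at h
    simpa using (by exact_mod_cast h : ∑ j, ‖U i j‖ ^ 2 = 1)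
  · have h : (star U * U) j j = (1 : Matrix n n 𝕜) j j := by rw [Unitary.star_mul_self_of_mem hU]
    simp only [mul_apply, star_apply, RCLike.star_def, RCLike.conj_mul, one_apply_eq] at h
    simpa using (by exact_mod_cast h : ∑ i, ‖U i j‖ ^ 2 = 1)

theorem Matrix.mul_diagonal_mul_star_apply_self (Q : Matrix n n 𝕜) (d : n → ℝ) (i : n) :
    (Q * diagonal (RCLike.ofReal ∘ d) * star Q : Matrix n n 𝕜) i i =
      ((of fun i j => ‖Q i j‖ ^ 2) *ᵥ d) i := by
  rw [mul_apply]
  simp only [mul_diagonal, star_apply, RCLike.star_def, mulVec, dotProduct, of_apply,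
    Function.comp_apply]
  push_cast
  refine sum_congr rfl fun k _ => ?_
  rw [← RCLike.mul_conj]
  ring

namespace Matrix.IsHermitian

variable {A : Matrix n n 𝕜} (hA : A.IsHermitian)

theorem trace_mul_eq_sum_diag_conj (B : Matrix n n 𝕜) :
    (B * A).trace = ∑ i, (star (hA.eigenvectorUnitary : Matrix n n 𝕜) * B *
      hA.eigenvectorUnitary) i i * hA.eigenvalues i := by
  conv_lhs => rw [hA.spectral_theorem]
  rw [Unitary.conjStarAlgAut_apply, ← mul_assoc, trace_mul_comm]
  simp only [trace, diag, ← mul_assoc, mul_diagonal, Function.comp_apply]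

/-- Peierls' inequality. -/
theorem sum_comp_re_diag_conj_le {f : ℝ → ℝ} {s : Set ℝ} (hf : ConvexOn ℝ s f)
    (hs : ∀ i, hA.eigenvalues i ∈ s) {V : Matrix n n 𝕜} (hV : V ∈ unitary (Matrix n n 𝕜)) :
    ∑ i, f (RCLike.re ((star V * A * V) i i)) ≤ ∑ i, f (hA.eigenvalues i) := by
  set Q := star V * (hA.eigenvectorUnitary : Matrix n n 𝕜)
  have hQ : Q ∈ unitary (Matrix n n 𝕜) := mul_mem (Unitary.star_mem hV) hA.eigenvectorUnitary.2
  have hconj : star V * A * V = Q * diagonal (RCLike.ofReal ∘ hA.eigenvalues) * star Q := by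
    conv_lhs => rw [hA.spectral_theorem]
    simp [Q, star_mul, mul_assoc]
  calc ∑ i, f (RCLike.re ((star V * A * V) i i))
      = ∑ i, f (((of fun i j => ‖Q i j‖ ^ 2) *ᵥ hA.eigenvalues) i) := by
        simp only [hconj, mul_diagonal_mul_star_apply_self, RCLike.ofReal_re]
    _ ≤ ∑ i, f (hA.eigenvalues i) :=
        hf.sum_comp_mulVec_le_of_mem_doublyStochastic
          (of_norm_sq_mem_doublyStochastic_of_mem_unitary hQ) hs

theorem sum_comp_eigenvalues_of_cfc_eq {f : ℝ → ℝ} {B : Matrix n n 𝕜} (hB : B.IsHermitian)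
    (hBA : cfc f A = B) (φ : ℝ → ℝ) :
    ∑ i, φ (hB.eigenvalues i) = ∑ i, φ (f (hA.eigenvalues i)) := by
  have h : univ.val.map hB.eigenvalues = univ.val.map (f ∘ hA.eigenvalues) := by
    apply Multiset.map_injective (RCLike.ofReal_injective (K := 𝕜))
    rw [Multiset.map_map, Multiset.map_map, ← hB.roots_charpoly_eq_eigenvalues, ← hBA,
      hA.charpoly_cfc_eq, prod_eq_multiset_prod]
    simpa only [Multiset.map_map, Function.comp_def] using
      Polynomial.roots_multiset_prod_X_sub_C (univ.val.map (RCLike.ofReal ∘ f ∘ hA.eigenvalues))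
  change (univ.val.map (φ ∘ hB.eigenvalues)).sum = (univ.val.map (φ ∘ (f ∘ hA.eigenvalues))).sum
  rw [← Multiset.map_map, h, Multiset.map_map]

theorem trace_cfc (f : ℝ → ℝ) : (cfc f A).trace = ∑ i, (f (hA.eigenvalues i) : 𝕜) := by
  have hB : (cfc f A).IsHermitian := cfc_predicate f A
  rw [hB.trace_eq_sum_eigenvalues]
  exact_mod_cast congrArg ((↑) : ℝ → 𝕜) (hA.sum_comp_eigenvalues_of_cfc_eq hB rfl id)

end Matrix.IsHermitian

theorem Matrix.IsHermitian.cfc_real_exp {A : Matrix n n ℂ} (hA : A.IsHermitian) :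
    cfc Real.exp A = NormedSpace.exp A := by
  open scoped Matrix.Norms.L2Operator in
  exact CFC.real_exp_eq_normedSpace_exp hA.isSelfAdjoint

end Matrix

/-- Gibbs variational principle for Hermitian matrices: for a Hermitian matrix `W` with
eigenvalues `μ i`, every density matrix `X` satisfies
`Re tr(WX) + S(X) ≤ log ∑ i exp (μ i)`, with equality at the Gibbs state
`exp W / tr (exp W)`, which is itself a density matrix. -/
theorem gibbs_variational_principle
    (n : ℕ) (hn : 1 ≤ n)
    (W : Matrix (Fin n) (Fin n) ℂ) (hW : W.IsHermitian) :
    (∀ (X : Matrix (Fin n) (Fin n) ℂ) (hX : X.PosSemidef), X.trace = 1 →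
      (W * X).trace.re + ∑ i, Real.negMulLog (hX.1.eigenvalues i) ≤
        Real.log (∑ i, Real.exp (hW.eigenvalues i))) ∧
    (∃ hG : ((∑ i, Real.exp (hW.eigenvalues i))⁻¹ •
        NormedSpace.exp W : Matrix (Fin n) (Fin n) ℂ).PosSemidef,
      ((∑ i, Real.exp (hW.eigenvalues i))⁻¹ •
        NormedSpace.exp W : Matrix (Fin n) (Fin n) ℂ).trace = 1 ∧
      (W * ((∑ i, Real.exp (hW.eigenvalues i))⁻¹ •
          NormedSpace.exp W : Matrix (Fin n) (Fin n) ℂ)).trace.re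
        + ∑ i, Real.negMulLog (hG.1.eigenvalues i)
        = Real.log (∑ i, Real.exp (hW.eigenvalues i))) := by
  have hne : (univ : Finset (Fin n)).Nonempty := univ_nonempty_iff.2 (Fin.pos_iff_nonempty.1 hn)
  set Z := ∑ i, Real.exp (hW.eigenvalues i)
  have hZ : 0 < Z := sum_pos (fun i _ => Real.exp_pos _) hne
  refine ⟨fun X hX hX_trace => ?_, ?_⟩
  · set V := hX.1.eigenvectorUnitary
    have henergy : (W * X).trace.re =
        ∑ i, hX.1.eigenvalues i * RCLike.re ((star V * W * V) i i) := by
      simp [hX.1.trace_mul_eq_sum_diag_conj, V, mul_comm]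
    have hprob : ∑ i, hX.1.eigenvalues i = 1 := by
      simpa using congrArg Complex.re (hX.1.trace_eq_sum_eigenvalues.symm.trans hX_trace)
    rw [henergy]
    exact Real.sum_mul_add_sum_negMulLog_le_log univ (fun i _ => hX.eigenvalues_nonneg i) hprob hZ
      (hW.sum_comp_re_diag_conj_le convexOn_exp (fun _ => Set.mem_univ _) V.2)
  · set g : ℝ → ℝ := fun x => Z⁻¹ * Real.exp x
    have hG : cfc g W = Z⁻¹ • NormedSpace.exp W := by
      rw [cfc_const_mul Z⁻¹ Real.exp W, hW.cfc_real_exp]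
    have hGpsd : (Z⁻¹ • NormedSpace.exp W).PosSemidef := by
      open MatrixOrder in
      exact hG ▸ nonneg_iff_posSemidef.1 (cfc_nonneg fun x _ => by positivity)
    have henergy : (W * (Z⁻¹ • NormedSpace.exp W)).trace.re =
        ∑ i, g (hW.eigenvalues i) * hW.eigenvalues i := by
      have hmul : cfc (fun x => x * g x) W = W * cfc g W := by
        rw [cfc_mul (fun x => x) g W, cfc_id' ℝ W]
      rw [← hG, ← hmul, hW.trace_cfc]
      simp [mul_comm]
    have hg_sum : ∑ i, g (hW.eigenvalues i) = 1 := by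
      simp only [g, ← mul_sum, Z, inv_mul_cancel₀ hZ.ne']
    refine ⟨hGpsd, ?_, ?_⟩
    · rw [← hG, hW.trace_cfc, ← RCLike.ofReal_sum, hg_sum, RCLike.ofReal_one]
    · rw [henergy, hW.sum_comp_eigenvalues_of_cfc_eq hGpsd.1 hG]
      exact Real.sum_mul_add_sum_negMulLog_eq_log_sum_exp univ hne hW.eigenvalues
end

section
/- Let n ≥ 1 and let X and Y be n×n complex Hermitian positive definite matrices with tr(X) = tr(Y) = 1. Let log X and log Y denote the matrix logarithms obtained by applying the real logarithm to the eigenvalues through the continuous functional calculus, and let ν_1,…,ν_n be the (real) eigenvalues of the Hermitian matrix X − Y. Then Re( tr( X · (log X − log Y) ) ) ≥ (1/2) ( ∑_{i=1}^n |ν_i| )². -/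
/-!
Diagonalise `X = A diag(a) A⋆` and `Y = B diag(b) B⋆`. The squared moduli
`P i j = ‖(A⋆B) i j‖²` form a doubly stochastic matrix, and
`D(X‖Y) = ∑ P i j * a i * (log a i - log b j)`. On the other side, `‖X - Y‖₁ = Re tr(S (X - Y))`
for the unitary `S = sign(X - Y)`, and expanding in the same two eigenbases gives
`‖X - Y‖₁ = ∑ (a i - b j) * Re((A⋆B) i j * G j i)` with `G = B⋆ S A` again unitary.
Cauchy–Schwarz with the weights `2 a i + 4 b j` and the scalar inequality
`3 (a - b)² ≤ (2 a + 4 b) (a log (a / b) - a + b)` give the bound; double stochasticity makes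
the linear terms `- a + b` cancel.
-/

open scoped ComplexOrder

open Real Finset Matrix

lemma monotoneOn_add_one_mul_log_sub :
    MonotoneOn (fun x : ℝ => (x + 1) * log x - 2 * (x - 1)) (Set.Ioi 0) := by
  refine monotoneOn_of_hasDerivWithinAt_nonneg (f' := fun x => log x + x⁻¹ - 1) (convex_Ioi 0)
    (fun x hx => by fun_prop (disch := exact ne_of_gt hx)) (fun x hx => ?_) (fun x hx => ?_)
  · rw [interior_Ioi] at hx
    have hx : x ≠ 0 := ne_of_gt hx
    refine (((((hasDerivAt_id x).add_const 1).mul (hasDerivAt_log hx)).sub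
      (((hasDerivAt_id x).sub_const 1).const_mul 2)).congr_deriv ?_).hasDerivWithinAt
    simp only [id]
    field_simp
    ring
  · rw [interior_Ioi] at hx
    linarith [one_sub_inv_le_log_of_pos hx]

namespace InformationTheory

lemma three_mul_sq_le_mul_klFun {x : ℝ} (hx : 0 < x) :
    3 * (x - 1) ^ 2 ≤ (2 * x + 4) * klFun x := by
  set g : ℝ → ℝ := fun x => (2 * x + 4) * klFun x - 3 * (x - 1) ^ 2
  have hderiv : ∀ x ≠ 0, HasDerivAt g (4 * ((x + 1) * log x - 2 * (x - 1))) x := fun x hx => by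
    refine ((((hasDerivAt_id x).const_mul 2).add_const 4).mul (hasDerivAt_klFun hx) |>.sub
      ((((hasDerivAt_id x).sub_const 1).pow 2).const_mul 3)).congr_deriv ?_
    simp only [klFun_apply, id]
    ring
  have hk := monotoneOn_add_one_mul_log_sub
  have hmin : IsMinOn g (Set.Ioi 0) 1 := by
    refine isMinOn_Ioi_of_deriv (hderiv 1 one_ne_zero).continuousAt
      (fun y hy => (hderiv y hy.1.ne').differentiableAt.differentiableWithinAt)
      (fun y hy => (hderiv y (one_pos.trans hy).ne').differentiableAt.differentiableWithinAt)
      (fun y hy => ?_) (fun y hy => ?_)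
    · rw [(hderiv y hy.1.ne').deriv]
      have := hk hy.1 (Set.mem_Ioi.2 one_pos) hy.2.le
      simp only [log_one] at this
      linarith
    · rw [(hderiv y (one_pos.trans hy).ne').deriv]
      have := hk (Set.mem_Ioi.2 one_pos) (Set.mem_Ioi.2 (one_pos.trans hy)) hy.le
      simp only [log_one] at this
      linarith
  have h1 : g 1 ≤ g x := hmin (Set.mem_Ioi.2 hx)
  norm_num [g, klFun_one] at h1
  linarith

end InformationTheory

lemma three_mul_sq_div_le_mul_log_sub {a b : ℝ} (ha : 0 < a) (hb : 0 < b) :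
    3 * (a - b) ^ 2 / (2 * a + 4 * b) ≤ a * (log a - log b) - a + b := by
  obtain ⟨x, hx, rfl⟩ : ∃ x, 0 < x ∧ a = x * b := ⟨a / b, div_pos ha hb, by field_simp⟩
  have key := InformationTheory.three_mul_sq_le_mul_klFun hx
  rw [InformationTheory.klFun_apply] at key
  rw [div_le_iff₀ (by positivity), log_mul hx.ne' hb.ne']
  nlinarith [mul_le_mul_of_nonneg_left key (sq_nonneg b)]

section DoublyStochastic

variable {ι : Type*} [Fintype ι] [DecidableEq ι]

lemma sum_sum_mul_add_of_mem_doublyStochastic {M : Matrix ι ι ℝ}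
    (hM : M ∈ doublyStochastic ℝ ι) (c d : ι → ℝ) :
    ∑ i, ∑ j, M i j * (c i + d j) = ∑ i, c i + ∑ j, d j := by
  simp only [mul_add, sum_add_distrib]
  rw [sum_comm (f := fun i j => M i j * d j)]
  simp only [mul_comm (M _ _), ← mul_sum, sum_row_of_mem_doublyStochastic hM,
    sum_col_of_mem_doublyStochastic hM, mul_one]

lemma three_mul_sum_sum_mul_sq_div_le {P : Matrix ι ι ℝ} (hP : P ∈ doublyStochastic ℝ ι)
    {a b : ι → ℝ} (ha : ∀ i, 0 < a i) (hb : ∀ j, 0 < b j) (hab : ∑ i, a i = ∑ j, b j) :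
    3 * ∑ i, ∑ j, P i j * ((a i - b j) ^ 2 / (2 * a i + 4 * b j)) ≤
      ∑ i, ∑ j, P i j * (a i * (log (a i) - log (b j))) := by
  have hzero := sum_sum_mul_add_of_mem_doublyStochastic hP (fun i => -a i) b
  rw [sum_neg_distrib, ← hab, neg_add_cancel] at hzero
  calc 3 * ∑ i, ∑ j, P i j * ((a i - b j) ^ 2 / (2 * a i + 4 * b j))
      = ∑ i, ∑ j, P i j * (3 * (a i - b j) ^ 2 / (2 * a i + 4 * b j)) := by
        simp only [mul_sum, mul_div_assoc]; ring_nf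
    _ ≤ ∑ i, ∑ j, P i j * (a i * (log (a i) - log (b j)) + (-a i + b j)) := by
        gcongr with i _ j _
        · exact nonneg_of_mem_doublyStochastic hP
        · linarith [three_mul_sq_div_le_mul_log_sub (ha i) (hb j)]
    _ = ∑ i, ∑ j, P i j * (a i * (log (a i) - log (b j))) +
          ∑ i, ∑ j, P i j * (-a i + b j) := by
        simp only [mul_add, sum_add_distrib]
    _ = _ := by rw [hzero, add_zero]

theorem sq_sum_sub_mul_le_two_mul_sum_mul_log {P Q : Matrix ι ι ℝ}
    (hP : P ∈ doublyStochastic ℝ ι) (hQ : Q ∈ doublyStochastic ℝ ι)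
    {a b : ι → ℝ} (ha : ∀ i, 0 < a i) (hb : ∀ j, 0 < b j) (hab : ∑ i, a i = ∑ j, b j)
    {r : ι → ι → ℝ} (hr : ∀ i j, r i j ^ 2 ≤ P i j * Q i j) :
    (∑ i, ∑ j, (a i - b j) * r i j) ^ 2 ≤
      2 * (∑ i, a i) * ∑ i, ∑ j, P i j * (a i * (log (a i) - log (b j))) := by
  have hpos : ∀ i j, 0 < 2 * a i + 4 * b j := fun i j => by linarith [ha i, hb j]
  have hCS := sum_sq_le_sum_mul_sum_of_sq_le_mul univ
    (r := fun p : ι × ι => (a p.1 - b p.2) * r p.1 p.2)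
    (f := fun p => P p.1 p.2 * ((a p.1 - b p.2) ^ 2 / (2 * a p.1 + 4 * b p.2)))
    (g := fun p => Q p.1 p.2 * (2 * a p.1 + 4 * b p.2))
    (fun p _ => mul_nonneg (nonneg_of_mem_doublyStochastic hP)
      (div_nonneg (sq_nonneg _) (hpos p.1 p.2).le))
    (fun p _ => mul_nonneg (nonneg_of_mem_doublyStochastic hQ) (hpos p.1 p.2).le)
    (fun p _ => calc
      ((a p.1 - b p.2) * r p.1 p.2) ^ 2 ≤ (a p.1 - b p.2) ^ 2 * (P p.1 p.2 * Q p.1 p.2) := by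
          rw [mul_pow]; exact mul_le_mul_of_nonneg_left (hr _ _) (sq_nonneg _)
      _ = _ := by rw [mul_mul_mul_comm, div_mul_cancel₀ _ (hpos _ _).ne']; ring)
  simp only [Fintype.sum_prod_type] at hCS
  have hQsum : ∑ i, ∑ j, Q i j * (2 * a i + 4 * b j) = 6 * ∑ i, a i := by
    rw [sum_sum_mul_add_of_mem_doublyStochastic hQ, ← mul_sum, ← mul_sum, ← hab]; ring
  have hs : 0 ≤ ∑ i, a i := sum_nonneg fun i _ => (ha i).le
  rw [hQsum] at hCS
  calc _ ≤ _ := hCS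
    _ = 2 * (∑ i, a i) * (3 * ∑ i, ∑ j, P i j * ((a i - b j) ^ 2 / (2 * a i + 4 * b j))) := by
      ring
    _ ≤ _ := by gcongr; exact three_mul_sum_sum_mul_sq_div_le hP ha hb hab

end DoublyStochastic

namespace Matrix

variable {n 𝕜 : Type*} [Fintype n] [DecidableEq n] [RCLike 𝕜]

lemma norm_sq_mem_doublyStochastic {U : Matrix n n 𝕜} (hU : U ∈ unitaryGroup n 𝕜) :
    of (fun i j => ‖U i j‖ ^ 2) ∈ doublyStochastic ℝ n := by
  refine mem_doublyStochastic_iff_sum.2 ⟨fun _ _ => sq_nonneg _, fun i => ?_, fun j => ?_⟩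
  · have h := congrFun₂ (mem_unitaryGroup_iff.1 hU) i i
    simp only [mul_apply, star_apply, RCLike.star_def, RCLike.mul_conj, one_apply_eq] at h
    exact_mod_cast h
  · have h := congrFun₂ (mem_unitaryGroup_iff'.1 hU) j j
    simp only [mul_apply, star_apply, RCLike.star_def, RCLike.conj_mul, one_apply_eq] at h
    exact_mod_cast h

lemma trace_mul_conj_diagonal (M U : Matrix n n 𝕜) (d : n → 𝕜) :
    (M * (U * diagonal d * star U)).trace = ∑ i, d i * (star U * M * U) i i := by
  rw [← Matrix.mul_assoc, trace_mul_cycle, ← Matrix.mul_assoc, trace_mul_comm]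
  simp [trace, diagonal_mul]

section TwoUnitaries

variable {A B : Matrix n n 𝕜} (hA : A ∈ unitaryGroup n 𝕜) (hB : B ∈ unitaryGroup n 𝕜)
include hA hB

lemma trace_mul_sub_conj_diagonal (M : Matrix n n 𝕜) (d e : n → 𝕜) :
    (M * (A * diagonal d * star A - B * diagonal e * star B)).trace =
      ∑ i, ∑ j, (d i - e j) * ((star A * B) i j * (star B * M * A) j i) := by
  have hA' : star A * M * A = (star A * B) * (star B * M * A) := by
    simp only [Matrix.mul_assoc, ← Matrix.mul_assoc B, Unitary.mul_star_self_of_mem hB,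
      Matrix.one_mul]
  have hB' : star B * M * B = (star B * M * A) * (star A * B) := by
    simp only [Matrix.mul_assoc, ← Matrix.mul_assoc A, Unitary.mul_star_self_of_mem hA,
      Matrix.one_mul]
  rw [Matrix.mul_sub, trace_sub, trace_mul_conj_diagonal, trace_mul_conj_diagonal, hA', hB']
  generalize star A * B = E
  generalize star B * M * A = G
  simp only [mul_apply, mul_sum, sub_mul, sum_sub_distrib]
  rw [sum_comm (f := fun j i => e j * _)]
  simp only [mul_comm (G _ _)]

lemma trace_conj_diagonal_mul_sub_conj_diagonal (c d e : n → 𝕜) :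
    (A * diagonal c * star A * (A * diagonal d * star A - B * diagonal e * star B)).trace =
      ∑ i, ∑ j, (‖(star A * B) i j‖ ^ 2 : 𝕜) * (c i * (d i - e j)) := by
  have h : star B * (A * diagonal c * star A) * A = star (star A * B) * diagonal c := by
    simp only [star_mul, star_star, Matrix.mul_assoc, Unitary.star_mul_self_of_mem hA,
      Matrix.mul_one]
  rw [trace_mul_sub_conj_diagonal hA hB, h]
  refine sum_congr rfl fun i _ => sum_congr rfl fun j _ => ?_
  rw [mul_diagonal, star_apply, RCLike.star_def, ← RCLike.mul_conj]
  ring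

end TwoUnitaries

namespace IsHermitian

lemma eq_eigenvectorUnitary_mul_diagonal_mul_star {Z : Matrix n n 𝕜} (hZ : Z.IsHermitian) :
    Z = (hZ.eigenvectorUnitary : Matrix n n 𝕜) * diagonal (RCLike.ofReal ∘ hZ.eigenvalues) *
      star (hZ.eigenvectorUnitary : Matrix n n 𝕜) := by
  simpa using hZ.spectral_theorem

lemma exists_unitary_trace_mul_eq_sum_abs_eigenvalues {Z : Matrix n n 𝕜} (hZ : Z.IsHermitian) :
    ∃ S ∈ unitaryGroup n 𝕜, (S * Z).trace = ∑ k, ((|hZ.eigenvalues k| : ℝ) : 𝕜) := by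
  set W : Matrix n n 𝕜 := ↑hZ.eigenvectorUnitary
  have hW : W ∈ unitaryGroup n 𝕜 := hZ.eigenvectorUnitary.2
  set s : n → ℝ := fun k => if hZ.eigenvalues k < 0 then -1 else 1
  have hs : ∀ k, s k * s k = 1 := fun k => by simp only [s]; split_ifs <;> norm_num
  have hD : diagonal (RCLike.ofReal ∘ s) ∈ unitaryGroup n 𝕜 := by
    rw [mem_unitaryGroup_iff, star_eq_conjTranspose, diagonal_conjTranspose,
      diagonal_mul_diagonal, ← diagonal_one]
    congr 1 with k
    simp [← RCLike.ofReal_mul, hs]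
  refine ⟨W * diagonal (RCLike.ofReal ∘ s) * star W,
    mul_mem (mul_mem hW hD) (Unitary.star_mem hW), ?_⟩
  have hWSW : star W * (W * diagonal (RCLike.ofReal ∘ s) * star W) * W =
      diagonal (RCLike.ofReal ∘ s) := by
    simp only [Matrix.mul_assoc, Unitary.star_mul_self_of_mem hW, Matrix.mul_one,
      ← Matrix.mul_assoc (star W), Matrix.one_mul]
  conv_lhs => rw [hZ.eq_eigenvectorUnitary_mul_diagonal_mul_star]
  rw [trace_mul_conj_diagonal, hWSW]
  refine sum_congr rfl fun k _ => ?_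
  simp only [diagonal_apply_eq, Function.comp_apply, ← RCLike.ofReal_mul, s]
  split_ifs with h
  · rw [abs_of_neg h]; ring_nf
  · rw [abs_of_nonneg (not_lt.1 h), mul_one]

variable {X Y : Matrix n n 𝕜} (hX : X.IsHermitian) (hY : Y.IsHermitian)

/-- The entry `(i, j)` is the inner product of the `i`-th eigenvector of `X` with the `j`-th
eigenvector of `Y`. -/
noncomputable def eigenvectorOverlap : Matrix n n 𝕜 :=
  star (hX.eigenvectorUnitary : Matrix n n 𝕜) * hY.eigenvectorUnitary

lemma eigenvectorOverlap_mem_unitaryGroup : eigenvectorOverlap hX hY ∈ unitaryGroup n 𝕜 :=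
  mul_mem (Unitary.star_mem hX.eigenvectorUnitary.2) hY.eigenvectorUnitary.2

lemma re_trace_mul_cfc_sub_cfc (f : ℝ → ℝ) :
    RCLike.re (X * (hX.cfc f - hY.cfc f)).trace =
      ∑ i, ∑ j, ‖eigenvectorOverlap hX hY i j‖ ^ 2 *
        (hX.eigenvalues i * (f (hX.eigenvalues i) - f (hY.eigenvalues j))) := by
  have h := trace_conj_diagonal_mul_sub_conj_diagonal hX.eigenvectorUnitary.2
    hY.eigenvectorUnitary.2 (RCLike.ofReal ∘ hX.eigenvalues)
    (RCLike.ofReal ∘ f ∘ hX.eigenvalues) (RCLike.ofReal ∘ f ∘ hY.eigenvalues)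
  rw [← hX.eq_eigenvectorUnitary_mul_diagonal_mul_star] at h
  rw [IsHermitian.cfc, IsHermitian.cfc, Unitary.conjStarAlgAut_apply,
    Unitary.conjStarAlgAut_apply, h]
  simp only [Function.comp_apply, ← RCLike.ofReal_sub, ← RCLike.ofReal_mul, ← RCLike.ofReal_pow,
    ← RCLike.ofReal_sum, RCLike.ofReal_re, eigenvectorOverlap]

lemma exists_sum_abs_eigenvalues_sub_eq :
    ∃ G ∈ unitaryGroup n 𝕜, ∑ k, |(hX.sub hY).eigenvalues k| =
      ∑ i, ∑ j, (hX.eigenvalues i - hY.eigenvalues j) *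
        RCLike.re (eigenvectorOverlap hX hY i j * G j i) := by
  obtain ⟨S, hS, hSXY⟩ := (hX.sub hY).exists_unitary_trace_mul_eq_sum_abs_eigenvalues
  refine ⟨star (hY.eigenvectorUnitary : Matrix n n 𝕜) * S * hX.eigenvectorUnitary,
    mul_mem (mul_mem (Unitary.star_mem hY.eigenvectorUnitary.2) hS) hX.eigenvectorUnitary.2, ?_⟩
  have h := trace_mul_sub_conj_diagonal hX.eigenvectorUnitary.2 hY.eigenvectorUnitary.2 S
    (RCLike.ofReal ∘ hX.eigenvalues) (RCLike.ofReal ∘ hY.eigenvalues)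
  rw [← hX.eq_eigenvectorUnitary_mul_diagonal_mul_star,
    ← hY.eq_eigenvectorUnitary_mul_diagonal_mul_star, hSXY] at h
  simpa only [map_sum, Function.comp_apply, ← RCLike.ofReal_sub, RCLike.re_ofReal_mul,
    RCLike.ofReal_re, eigenvectorOverlap] using congrArg RCLike.re h

end IsHermitian

end Matrix

theorem quantum_relative_entropy_strong_convexity_general
    (n : ℕ)
    (X Y : Matrix (Fin n) (Fin n) ℂ)
    (hX : X.PosDef) (hY : Y.PosDef)
    (hXtr : X.trace = 1) (hYtr : Y.trace = 1) :
    (1 / 2) * (∑ i, |(hX.1.sub hY.1).eigenvalues i|)^2 ≤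
      (X * (hX.1.cfc Real.log - hY.1.cfc Real.log)).trace.re := by
  have hsum : ∀ {Z : Matrix (Fin n) (Fin n) ℂ} (hZ : Z.IsHermitian), Z.trace = 1 →
      ∑ i, hZ.eigenvalues i = 1 := fun hZ h => by
    rw [hZ.trace_eq_sum_eigenvalues, ← RCLike.ofReal_sum, ← RCLike.ofReal_one] at h
    exact RCLike.ofReal_injective h
  obtain ⟨G, hG, hnorm⟩ := hX.1.exists_sum_abs_eigenvalues_sub_eq hY.1
  have key := sq_sum_sub_mul_le_two_mul_sum_mul_log
    (norm_sq_mem_doublyStochastic (hX.1.eigenvectorOverlap_mem_unitaryGroup hY.1))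
    (transpose_mem_doublyStochastic_iff.2 (norm_sq_mem_doublyStochastic hG))
    hX.eigenvalues_pos hY.eigenvalues_pos ((hsum hX.1 hXtr).trans (hsum hY.1 hYtr).symm)
    (r := fun i j => RCLike.re (hX.1.eigenvectorOverlap hY.1 i j * G j i)) fun i j => by
      rw [of_apply, transpose_apply, of_apply, ← mul_pow, ← norm_mul, ← sq_abs]
      exact pow_le_pow_left₀ (abs_nonneg _) (RCLike.abs_re_le_norm _) 2
  rw [hsum hX.1 hXtr] at key
  rw [← RCLike.re_to_complex, hX.1.re_trace_mul_cfc_sub_cfc hY.1, hnorm]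
  simp only [of_apply] at key
  linarith

/-- Quantum Pinsker-type inequality: for trace-one Hermitian positive definite matrices
`X` and `Y`, the relative entropy `Re tr(X (log X − log Y))` dominates half the squared
trace-one norm of `X − Y` (sum of absolute values of the eigenvalues of `X − Y`). -/
theorem quantum_relative_entropy_strong_convexity
    (n : ℕ) (hn : 1 ≤ n)
    (X Y : Matrix (Fin n) (Fin n) ℂ)
    (hX : X.PosDef) (hY : Y.PosDef)
    (hXtr : X.trace = 1) (hYtr : Y.trace = 1) :
    (1 / 2) * (∑ i, |(hX.1.sub hY.1).eigenvalues i|)^2 ≤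
      (X * (hX.1.cfc Real.log - hY.1.cfc Real.log)).trace.re :=
  quantum_relative_entropy_strong_convexity_general n X Y hX hY hXtr hYtr
end

section
/- Let d ≥ 1 and let x, y ∈ ℝ^d with ‖x‖₂ < 1/2, ‖y‖₂ < 1/2 and y ≠ 0. Then (1/2+‖x‖₂)·log(1/2+‖x‖₂) + (1/2−‖x‖₂)·log(1/2−‖x‖₂) − (1/2)·log(1/4 − ‖y‖₂²) − (⟨x,y⟩/‖y‖₂)·log( (1/2+‖y‖₂)/(1/2−‖y‖₂) ) ≥ 2‖x−y‖₂². -/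
/-!
Write `a = ‖x‖`, `b = ‖y‖` and `t = ⟨x, y⟩ / b ≤ a`; Lean's `t = 0` at `y = 0` keeps
`⟨x, y⟩ = t b`, so that case needs no separate treatment. With `h(u) = (1/2+u) log(1/2+u) +
(1/2-u) log(1/2-u)` the right-hand side is the one-variable Bregman divergence
`h(a) - h(b) - h'(b) (t - b)`, where `h'(u) = log(1/2+u) - log(1/2-u)`. Since
`h''(u) = 1/(1/4 - u²) ≥ 4`, the tangent bound of strong convexity gives
`h(a) - h(b) - h'(b) (a - b) ≥ 2 (a - b)²`, and `h'(b) ≥ 4 b` gives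
`h'(b) (a - t) ≥ 4 b (a - t)`. Adding the two yields `2 (a² - 2 t b + b²) = 2 ‖x - y‖²`.
-/

open Real Set

theorem ConvexOn.add_mul_sub_le_of_hasDerivAt {S : Set ℝ} {f : ℝ → ℝ} {a b f' : ℝ}
    (hf : ConvexOn ℝ S f) (ha : a ∈ S) (hb : b ∈ S) (hfb : HasDerivAt f f' b) :
    f b + f' * (a - b) ≤ f a := by
  rcases lt_trichotomy a b with hab | rfl | hab
  · have := hf.slope_le_of_hasDerivAt ha hb hab hfb
    rw [slope_def_field, div_le_iff₀ (sub_pos.2 hab)] at this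
    linarith
  · simp
  · have := hf.le_slope_of_hasDerivAt hb ha hab hfb
    rw [slope_def_field, le_div_iff₀ (sub_pos.2 hab)] at this
    linarith

theorem add_mul_sub_add_sq_le_of_le_hasDerivAt₂ {S : Set ℝ} {f f' f'' : ℝ → ℝ} {m a b : ℝ}
    (hS : Convex ℝ S) (hSo : IsOpen S) (hf : ∀ u ∈ S, HasDerivAt f (f' u) u)
    (hf' : ∀ u ∈ S, HasDerivAt f' (f'' u) u) (hm : ∀ u ∈ S, m ≤ f'' u)
    (ha : a ∈ S) (hb : b ∈ S) :
    f b + f' b * (a - b) + m / 2 * (a - b) ^ 2 ≤ f a := by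
  have hg (u : ℝ) (hu : u ∈ S) : HasDerivAt (fun v ↦ f v - m / 2 * v ^ 2) (f' u - m * u) u := by
    refine ((hf u hu).fun_sub ((hasDerivAt_pow 2 u).const_mul (m / 2))).congr_deriv ?_
    norm_num
    ring
  have hg' (u : ℝ) (hu : u ∈ S) : HasDerivAt (fun v ↦ f' v - m * v) (f'' u - m) u := by
    simpa using (hf' u hu).fun_sub ((hasDerivAt_id' u).const_mul m)
  have hconvex : ConvexOn ℝ S (fun v ↦ f v - m / 2 * v ^ 2) := by
    refine convexOn_of_hasDerivWithinAt2_nonneg (f' := fun v ↦ f' v - m * v)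
      (f'' := fun v ↦ f'' v - m) hS
      (fun u hu ↦ (hg u hu).continuousAt.continuousWithinAt) ?_ ?_ ?_ <;>
      rw [hSo.interior_eq]
    · exact fun u hu ↦ (hg u hu).hasDerivWithinAt
    · exact fun u hu ↦ (hg' u hu).hasDerivWithinAt
    · exact fun u hu ↦ sub_nonneg.2 (hm u hu)
  have := hconvex.add_mul_sub_le_of_hasDerivAt ha hb (hg b hb)
  linarith

theorem mul_sub_le_sub_of_le_hasDerivAt {S : Set ℝ} {f f' : ℝ → ℝ} {m a b : ℝ}
    (hS : Convex ℝ S) (hf : ∀ u ∈ S, HasDerivAt f (f' u) u)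
    (hm : ∀ u ∈ S, m ≤ f' u) (ha : a ∈ S) (hb : b ∈ S) (hab : a ≤ b) :
    m * (b - a) ≤ f b - f a :=
  hS.mul_sub_le_image_sub_of_le_deriv
    (fun u hu ↦ (hf u hu).continuousAt.continuousWithinAt)
    (fun u hu ↦ (hf u (interior_subset hu)).differentiableAt.differentiableWithinAt)
    (fun u hu ↦ (hf u (interior_subset hu)).deriv ▸ hm u (interior_subset hu)) a ha b hb hab

/-- The negative entropy of the spin-factor element `(1/2, x)` with `‖x‖ = u`, whose
eigenvalues are `1/2 ± u`. -/
noncomputable def spinEntropy (u : ℝ) : ℝ :=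
  (1/2 + u) * log (1/2 + u) + (1/2 - u) * log (1/2 - u)

section spinEntropy

variable {u : ℝ}

theorem hasDerivAt_spinEntropy (hu : u ∈ Ioo (-(1/2)) (1/2)) :
    HasDerivAt spinEntropy (log (1/2 + u) - log (1/2 - u)) u := by
  have hp : 1/2 + u ≠ 0 := by linarith [hu.1]
  have hm : 1/2 - u ≠ 0 := by linarith [hu.2]
  have hplus := ((hasDerivAt_id' u).const_add (1/2 : ℝ)).fun_mul
    (((hasDerivAt_id' u).const_add (1/2 : ℝ)).log hp)
  have hminus := ((hasDerivAt_id' u).const_sub (1/2 : ℝ)).fun_mul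
    (((hasDerivAt_id' u).const_sub (1/2 : ℝ)).log hm)
  refine (hplus.fun_add hminus).congr_deriv ?_
  rw [mul_one_div_cancel hp, mul_div_assoc', mul_neg_one, neg_div, div_self hm]
  ring

theorem hasDerivAt_log_sub_log (hu : u ∈ Ioo (-(1/2)) (1/2)) :
    HasDerivAt (fun v ↦ log (1/2 + v) - log (1/2 - v)) ((1/2 + u)⁻¹ + (1/2 - u)⁻¹) u := by
  have hp : 1/2 + u ≠ 0 := by linarith [hu.1]
  have hm : 1/2 - u ≠ 0 := by linarith [hu.2]
  refine ((((hasDerivAt_id' u).const_add (1/2 : ℝ)).log hp).fun_sub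
    (((hasDerivAt_id' u).const_sub (1/2 : ℝ)).log hm)).congr_deriv ?_
  field_simp
  ring

theorem four_le_inv_add_inv (hu : u ∈ Ioo (-(1/2)) (1/2)) :
    4 ≤ (1/2 + u)⁻¹ + (1/2 - u)⁻¹ := by
  have hp : 0 < 1/2 + u := by linarith [hu.1]
  have hm : 0 < 1/2 - u := by linarith [hu.2]
  rw [inv_add_inv hp.ne' hm.ne', le_div_iff₀ (mul_pos hp hm)]
  nlinarith [sq_nonneg u]

theorem spinEntropy_add_mul_sub_add_sq_le {a b : ℝ} (ha : a ∈ Ioo (-(1/2)) (1/2))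
    (hb : b ∈ Ioo (-(1/2)) (1/2)) :
    spinEntropy b + (log (1/2 + b) - log (1/2 - b)) * (a - b) + 2 * (a - b) ^ 2
      ≤ spinEntropy a := by
  have := add_mul_sub_add_sq_le_of_le_hasDerivAt₂ (convex_Ioo _ _) isOpen_Ioo
    (fun _ hu ↦ hasDerivAt_spinEntropy hu) (fun _ hu ↦ hasDerivAt_log_sub_log hu)
    (fun _ hu ↦ four_le_inv_add_inv hu) ha hb
  norm_num at this
  exact this

theorem four_mul_le_log_sub_log {b : ℝ} (hb0 : 0 ≤ b) (hb : b < 1/2) :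
    4 * b ≤ log (1/2 + b) - log (1/2 - b) := by
  have := mul_sub_le_sub_of_le_hasDerivAt (f := fun v ↦ log (1/2 + v) - log (1/2 - v))
    (convex_Ioo (-(1/2)) (1/2)) (fun _ hu ↦ hasDerivAt_log_sub_log hu)
    (fun _ hu ↦ four_le_inv_add_inv hu) (by norm_num) ⟨by linarith, hb⟩ hb0
  simpa using this

end spinEntropy

theorem soc_entropy_strongly_convex_general
    (d : ℕ) (x y : EuclideanSpace ℝ (Fin d))
    (hx : ‖x‖ < 1/2) (hy : ‖y‖ < 1/2) :
    2 * ‖x - y‖^2 ≤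
      (1/2 + ‖x‖) * Real.log (1/2 + ‖x‖) + (1/2 - ‖x‖) * Real.log (1/2 - ‖x‖)
        - (1/2) * Real.log (1/4 - ‖y‖^2)
        - ((inner ℝ x y : ℝ) / ‖y‖) * Real.log ((1/2 + ‖y‖) / (1/2 - ‖y‖)) := by
  set t := (inner ℝ x y : ℝ) / ‖y‖
  have hinner : inner ℝ x y = t * ‖y‖ := by
    refine (div_mul_cancel_of_imp fun hy0 ↦ ?_).symm
    rw [norm_eq_zero.1 hy0, inner_zero_right]
  have ht : t ≤ ‖x‖ := div_le_of_le_mul₀ (norm_nonneg y) (norm_nonneg x) (real_inner_le_norm x y)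
  have hp : 0 < 1/2 + ‖y‖ := by positivity
  have hm : 0 < 1/2 - ‖y‖ := by linarith
  have htangent := spinEntropy_add_mul_sub_add_sq_le (a := ‖x‖) ⟨by linarith [norm_nonneg x], hx⟩
    ⟨by linarith [norm_nonneg y], hy⟩
  have hslope := four_mul_le_log_sub_log (norm_nonneg y) hy
  rw [norm_sub_sq_real, hinner, Real.log_div hp.ne' hm.ne',
    show (1/4 - ‖y‖ ^ 2 : ℝ) = (1/2 + ‖y‖) * (1/2 - ‖y‖) by ring, Real.log_mul hp.ne' hm.ne']
  unfold spinEntropy at htangent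
  linarith [mul_nonneg (sub_nonneg.2 hslope) (sub_nonneg.2 ht)]

/-- Strong convexity of the spin-factor (second-order cone) negative entropy with respect
to the trace-one norm, written out explicitly: the Bregman divergence between the points
`(1/2, x)` and `(1/2, y)` of the generalized simplex dominates `2‖x − y‖²`. -/
theorem soc_entropy_strongly_convex
    (d : ℕ) (hd : 1 ≤ d) (x y : EuclideanSpace ℝ (Fin d))
    (hx : ‖x‖ < 1/2) (hy : ‖y‖ < 1/2) (hy0 : y ≠ 0) :
    2 * ‖x - y‖^2 ≤
      (1/2 + ‖x‖) * Real.log (1/2 + ‖x‖) + (1/2 - ‖x‖) * Real.log (1/2 - ‖x‖)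
        - (1/2) * Real.log (1/4 - ‖y‖^2)
        - ((inner ℝ x y : ℝ) / ‖y‖) * Real.log ((1/2 + ‖y‖) / (1/2 - ‖y‖)) :=
  soc_entropy_strongly_convex_general d x y hx hy
end
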